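/- arXiv:1512.06275 — 11 statements merged into one kernel-verified Lean document; each statement's English description precedes it below -/
import Mathlib

section
/- A quandle Q is medial if and only if its displacement group Dis(Q) is abelian. -/
/-- A quandle `Q` is medial if and only if its displacement group `Dis(Q)`
is abelian. -/
theorem medial_iff_displacement_abelian {Q : Type*} (op : Q → Q → Q)
    (L : Q → Equiv.Perm Q) (hL : ∀ x y, L x y = op x y)
    (hidem : ∀ x, op x x = x)
    (hldist : ∀ x y z, op x (op y z) = op (op x y) (op x z)) :
    (∀ x y u v, op (op x y) (op u v) = op (op x u) (op y v)) ↔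
    ∀ a ∈ Subgroup.closure {h : Equiv.Perm Q | ∃ x y : Q, h = L x * (L y)⁻¹},
      ∀ b ∈ Subgroup.closure {h : Equiv.Perm Q | ∃ x y : Q, h = L x * (L y)⁻¹},
        a * b = b * a := by
  have hcomp : ∀ x y, L (op x y) * L x = L x * L y := by
    intro x y; ext z
    simp only [Equiv.Perm.mul_apply, hL]
    exact (hldist x y z).symm
  have hLxy : ∀ x y, L (op x y) = L x * L y * (L x)⁻¹ := by
    intro x y
    rw [eq_mul_inv_iff_mul_eq]
    exact hcomp x y
  constructor
  · intro hmed
    -- medial implies M'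
    have hM' : ∀ x y u, L y * (L x)⁻¹ * L u = L u * (L x)⁻¹ * L y := by
      intro x y u
      have h1 : L (op x y) * L u = L (op x u) * L y := by
        ext v
        simp only [Equiv.Perm.mul_apply, hL]
        exact hmed x y u v
      rw [hLxy, hLxy] at h1
      have h2 : L x * (L y * (L x)⁻¹ * L u) = L x * (L u * (L x)⁻¹ * L y) := by
        simpa [mul_assoc] using h1
      exact mul_left_cancel h2
    -- same-base generators commute
    have hSc : ∀ e a b : Q, Commute (L a * (L e)⁻¹) (L b * (L e)⁻¹) := by
      intro e a b
      show _ = _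
      calc (L a * (L e)⁻¹) * (L b * (L e)⁻¹)
          = (L a * (L e)⁻¹ * L b) * (L e)⁻¹ := by group
        _ = (L b * (L e)⁻¹ * L a) * (L e)⁻¹ := by rw [hM']
        _ = (L b * (L e)⁻¹) * (L a * (L e)⁻¹) := by group
    -- arbitrary generators commute
    have hgen : ∀ g ∈ {h : Equiv.Perm Q | ∃ x y : Q, h = L x * (L y)⁻¹},
        ∀ h ∈ {h : Equiv.Perm Q | ∃ x y : Q, h = L x * (L y)⁻¹}, Commute g h := by
      rintro g ⟨x, y, rfl⟩ h ⟨u, v, rfl⟩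
      have hdec : L u * (L v)⁻¹ = (L u * (L y)⁻¹) * (L v * (L y)⁻¹)⁻¹ := by group
      rw [hdec]
      exact ((hSc y x u).mul_right (hSc y x v).inv_right)
    intro a ha b hb
    induction ha, hb using Subgroup.closure_induction₂ with
    | mem x y hx hy => exact hgen x hx y hy
    | one_left x hx => simp
    | one_right x hx => simp
    | mul_left x y z hx hy hz h1 h2 => exact (Commute.mul_left h1 h2 : Commute _ _)
    | mul_right y z x hy hz hx h1 h2 => exact (Commute.mul_right h1 h2 : Commute _ _)
    | inv_left x y hx hy h1 => exact (Commute.inv_left h1 : Commute _ _)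
    | inv_right x y hx hy h1 => exact (Commute.inv_right h1 : Commute _ _)
  · intro hab x y u v
    have hg : (L y * (L x)⁻¹) ∈ Subgroup.closure
        {h : Equiv.Perm Q | ∃ x y : Q, h = L x * (L y)⁻¹} :=
      Subgroup.subset_closure ⟨y, x, rfl⟩
    have hh : (L u * (L x)⁻¹) ∈ Subgroup.closure
        {h : Equiv.Perm Q | ∃ x y : Q, h = L x * (L y)⁻¹} :=
      Subgroup.subset_closure ⟨u, x, rfl⟩
    have hc := hab _ hg _ hh
    have hM' : L y * (L x)⁻¹ * L u = L u * (L x)⁻¹ * L y := by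
      have h2 : L y * (L x)⁻¹ * L u * (L x)⁻¹ = L u * (L x)⁻¹ * L y * (L x)⁻¹ := by
        simpa [mul_assoc] using hc
      exact mul_right_cancel h2
    have h1 : L (op x y) * L u = L (op x u) * L y := by
      rw [hLxy, hLxy]
      calc L x * L y * (L x)⁻¹ * L u = L x * (L y * (L x)⁻¹ * L u) := by
            simp [mul_assoc]
        _ = L x * (L u * (L x)⁻¹ * L y) := by rw [hM']
        _ = L x * L u * (L x)⁻¹ * L y := by simp [mul_assoc]
    have := congrArg (fun f : Equiv.Perm Q => f v) h1
    simpa [Equiv.Perm.mul_apply, hL] using this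
end

section
/- Let Q be a medial quandle, α ∈ Dis(Q), and x, y ∈ Q. Then L_x α L_x^{-1} = L_y α L_y^{-1}; that is, conjugation of displacement group elements by left translations is independent of the chosen translation. -/
/-- In a medial quandle, conjugation of a displacement group element by a left
translation does not depend on the translation: `L x * α * (L x)⁻¹ = L y * α * (L y)⁻¹`. -/
theorem conj_by_left_translation_independent {Q : Type*} (op : Q → Q → Q)
    (L : Q → Equiv.Perm Q) (hL : ∀ x y, L x y = op x y)
    (hidem : ∀ x, op x x = x)
    (hldist : ∀ x y z, op x (op y z) = op (op x y) (op x z))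
    (hmed : ∀ x y u v, op (op x y) (op u v) = op (op x u) (op y v)) :
    ∀ α ∈ Subgroup.closure {h : Equiv.Perm Q | ∃ x y : Q, h = L x * (L y)⁻¹},
      ∀ x y : Q, L x * α * (L x)⁻¹ = L y * α * (L y)⁻¹ := by
  set S : Set (Equiv.Perm Q) := {h : Equiv.Perm Q | ∃ x y : Q, h = L x * (L y)⁻¹} with hS
  -- L x * L u = L (op x u) * L x
  have hswap : ∀ x u, L x * L u = L (op x u) * L x := by
    intro x u; ext z
    simp only [Equiv.Perm.mul_apply, hL]
    exact hldist x u z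
  have hconj : ∀ x u, L x * L u * (L x)⁻¹ = L (op x u) := by
    intro x u; rw [hswap]; group
  -- mediality as a permutation identity
  have hmedL : ∀ p q r, L (op p q) * L r = L (op p r) * L q := by
    intro p q r; ext s
    simp only [Equiv.Perm.mul_apply, hL]
    exact hmed p q r s
  -- the key identity
  have hI : ∀ p q r, L q * (L p)⁻¹ * L r = L r * (L p)⁻¹ * L q := by
    intro p q r
    have h1 := hmedL p q r
    rw [← hconj p q, ← hconj p r] at h1
    have h2 := congrArg (fun g => (L p)⁻¹ * g) h1
    simpa [mul_assoc] using h2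
  have hI' : ∀ p q r, (L q)⁻¹ * L p * (L r)⁻¹ = (L r)⁻¹ * L p * (L q)⁻¹ := by
    intro p q r
    have := congrArg Inv.inv (hI p r q)
    simpa [mul_assoc] using this
  -- generators commute
  have hgen : ∀ a b c d : Q,
      (L a * (L b)⁻¹) * (L c * (L d)⁻¹) = (L c * (L d)⁻¹) * (L a * (L b)⁻¹) := by
    intro a b c d
    calc L a * (L b)⁻¹ * (L c * (L d)⁻¹)
        = (L a * (L b)⁻¹ * L c) * (L d)⁻¹ := by group
      _ = (L c * (L b)⁻¹ * L a) * (L d)⁻¹ := by rw [hI b a c]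
      _ = L c * ((L b)⁻¹ * L a * (L d)⁻¹) := by group
      _ = L c * ((L d)⁻¹ * L a * (L b)⁻¹) := by rw [hI' a b d]
      _ = L c * (L d)⁻¹ * (L a * (L b)⁻¹) := by group
  -- the closure is abelian
  have hcomm : ∀ α ∈ Subgroup.closure S, ∀ β ∈ Subgroup.closure S, α * β = β * α := by
    intro α hα β hβ
    induction hα, hβ using Subgroup.closure_induction₂ with
    | mem u v hu hv =>
        obtain ⟨a, b, rfl⟩ := hu
        obtain ⟨c, d, rfl⟩ := hv
        exact hgen a b c d
    | one_left v hv => simp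
    | one_right v hv => simp
    | mul_left u v w hu hv hw h1 h2 => rw [mul_assoc, h2, ← mul_assoc, h1, mul_assoc]
    | mul_right u v w hu hv hw h1 h2 => rw [← mul_assoc, h1, mul_assoc, h2, ← mul_assoc]
    | inv_left u v hu hv h =>
        have hc : Commute u v := h
        exact hc.inv_left.eq
    | inv_right u v hu hv h =>
        have hc : Commute u v := h
        exact hc.inv_right.eq
  -- the closure is stable under conjugation by translations
  have hmem : ∀ α ∈ Subgroup.closure S, ∀ x : Q,
      L x * α * (L x)⁻¹ ∈ Subgroup.closure S := by
    intro α hα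
    induction hα using Subgroup.closure_induction with
    | mem u hu =>
        intro x
        obtain ⟨a, b, rfl⟩ := hu
        have : L x * (L a * (L b)⁻¹) * (L x)⁻¹
            = L (op x a) * (L (op x b))⁻¹ := by
          rw [← hconj x a, ← hconj x b]; group
        rw [this]
        exact Subgroup.subset_closure ⟨op x a, op x b, rfl⟩
    | one => intro x; simpa using Subgroup.one_mem _
    | mul u v hu hv h1 h2 =>
        intro x
        have : L x * (u * v) * (L x)⁻¹
            = (L x * u * (L x)⁻¹) * (L x * v * (L x)⁻¹) := by group
        rw [this]; exact Subgroup.mul_mem _ (h1 x) (h2 x)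
    | inv u hu h =>
        intro x
        have : L x * u⁻¹ * (L x)⁻¹ = (L x * u * (L x)⁻¹)⁻¹ := by group
        rw [this]; exact Subgroup.inv_mem _ (h x)
  intro α hα x y
  have hg : L x * (L y)⁻¹ ∈ Subgroup.closure S := Subgroup.subset_closure ⟨x, y, rfl⟩
  have hb : L y * α * (L y)⁻¹ ∈ Subgroup.closure S := hmem α hα y
  have key : L x * α * (L x)⁻¹
      = (L x * (L y)⁻¹) * (L y * α * (L y)⁻¹) * (L x * (L y)⁻¹)⁻¹ := by group
  rw [key, hcomm _ hg _ hb]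
  group
end

section
/- Let Q be a medial quandle generated by a subset X, and fix z ∈ X. Then the group Dis(Q) is generated by the set of all conjugates L^k (L_x L_z^{-1}) L^{-k} for x ∈ X and k ∈ ℤ, where L denotes conjugation by any left translation (which is well-defined since Dis(Q) is abelian). -/
/-!
The displacement group is generated by the `L x * (L z)⁻¹`, since
`L x * (L y)⁻¹ = (L x * (L z)⁻¹) * (L y * (L z)⁻¹)⁻¹`. Left distributivity gives
`L (a ∘ b) = L a * L b * (L a)⁻¹`, which rewrites the displacement of `a ∘ b` (and of
`(L a)⁻¹ b`) as a product of displacements of `a` and `b` conjugated by powers of `L z`.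
Hence the set of `q` all of whose conjugated displacements lie in the right-hand subgroup is
closed under the quandle operations, so it is all of `Q`. Conversely, conjugating `L x` by a
power of `L z` gives `L ((L z ^ k) x)`, a left translation.
-/

namespace Displacement

section Group

variable {Q G : Type*} [Group G]

/-- The element `(L_x L_z⁻¹)^{L^k}` of the paper, with `L_z` as the left translation. -/
def conjDisplacement (L : Q → G) (z x : Q) (k : ℤ) : G :=
  L z ^ k * (L x * (L z)⁻¹) * L z ^ (-k)

variable {L : Q → G} {z : Q}

@[simp]
theorem conjDisplacement_zero (x : Q) : conjDisplacement L z x 0 = L x * (L z)⁻¹ := by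
  simp [conjDisplacement]

theorem mul_inv_eq_conjDisplacement_zero (x y : Q) :
    L x * (L y)⁻¹ = conjDisplacement L z x 0 * (conjDisplacement L z y 0)⁻¹ := by
  simp

theorem conjDisplacement_of_conj {a b c : Q} (hc : L c = L a * L b * (L a)⁻¹) (k : ℤ) :
    conjDisplacement L z c k = conjDisplacement L z a k * conjDisplacement L z b (k + 1) *
      (conjDisplacement L z a (k + 1))⁻¹ := by
  simp only [conjDisplacement, hc]
  group

theorem conjDisplacement_of_inv_conj {a b c : Q} (hc : L c = (L a)⁻¹ * L b * L a) (k : ℤ) :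
    conjDisplacement L z c k = (conjDisplacement L z a (k - 1))⁻¹ *
      conjDisplacement L z b (k - 1) * conjDisplacement L z a k := by
  simp only [conjDisplacement, hc]
  group

variable {H : Subgroup G} {a b c : Q}

theorem conjDisplacement_mem_of_conj (hc : L c = L a * L b * (L a)⁻¹)
    (ha : ∀ k, conjDisplacement L z a k ∈ H) (hb : ∀ k, conjDisplacement L z b k ∈ H) (k : ℤ) :
    conjDisplacement L z c k ∈ H := by
  rw [conjDisplacement_of_conj hc]
  exact mul_mem (mul_mem (ha k) (hb (k + 1))) (inv_mem (ha (k + 1)))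

theorem conjDisplacement_mem_of_inv_conj (hc : L c = (L a)⁻¹ * L b * L a)
    (ha : ∀ k, conjDisplacement L z a k ∈ H) (hb : ∀ k, conjDisplacement L z b k ∈ H) (k : ℤ) :
    conjDisplacement L z c k ∈ H := by
  rw [conjDisplacement_of_inv_conj hc]
  exact mul_mem (mul_mem (inv_mem (ha (k - 1))) (hb (k - 1))) (ha k)

end Group

section Perm

variable {Q : Type*}

def opAut (op : Q → Q → Q) : Subgroup (Equiv.Perm Q) where
  carrier := {σ | ∀ y w, σ (op y w) = op (σ y) (σ w)}
  one_mem' _ _ := rfl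
  mul_mem' {σ τ} hσ hτ y w := by
    rw [Equiv.Perm.mul_apply, hτ y w, hσ]
    rfl
  inv_mem' {σ} hσ y w := by
    apply σ.injective
    rw [hσ]
    simp only [Equiv.Perm.coe_inv, Equiv.apply_symm_apply]

variable {op : Q → Q → Q} {L : Q → Equiv.Perm Q}

theorem mem_opAut {σ : Equiv.Perm Q} : σ ∈ opAut op ↔ ∀ y w, σ (op y w) = op (σ y) (σ w) :=
  Iff.rfl

theorem mem_opAut_of_leftDistrib (hL : ∀ x y, L x y = op x y)
    (hldist : ∀ x y w, op x (op y w) = op (op x y) (op x w)) (x : Q) : L x ∈ opAut op := by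
  intro y w
  rw [hL, hL, hL, hldist]

theorem apply_eq_conj_of_mem_opAut (hL : ∀ x y, L x y = op x y) {σ : Equiv.Perm Q}
    (hσ : σ ∈ opAut op) (a : Q) : L (σ a) = σ * L a * σ⁻¹ := by
  ext y
  rw [mem_opAut] at hσ
  simp only [Equiv.Perm.mul_apply, hL, hσ, Equiv.Perm.coe_inv, Equiv.apply_symm_apply]

end Perm

end Displacement

open Displacement in
theorem displacement_generators_of_generated_medial_quandle_general {Q : Type*}
    (op : Q → Q → Q)
    (L : Q → Equiv.Perm Q) (hL : ∀ x y, L x y = op x y)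
    (hldist : ∀ x y z, op x (op y z) = op (op x y) (op x z))
    (X : Set Q) (z : Q)
    (hgen : ∀ S : Set Q, X ⊆ S →
      (∀ a b, a ∈ S → b ∈ S → op a b ∈ S ∧ (L a)⁻¹ b ∈ S) → ∀ q, q ∈ S) :
    Subgroup.closure {h : Equiv.Perm Q | ∃ x y : Q, h = L x * (L y)⁻¹} =
      Subgroup.closure {h : Equiv.Perm Q |
        ∃ x ∈ X, ∃ k : ℤ, h = (L z) ^ k * (L x * (L z)⁻¹) * (L z) ^ (-k)} := by
  have hAut := mem_opAut_of_leftDistrib hL hldist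
  apply le_antisymm
  · set N := Subgroup.closure {h : Equiv.Perm Q |
      ∃ x ∈ X, ∃ k : ℤ, h = (L z) ^ k * (L x * (L z)⁻¹) * (L z) ^ (-k)}
    have hmem : ∀ q k, conjDisplacement L z q k ∈ N := by
      refine hgen {q | ∀ k, conjDisplacement L z q k ∈ N}
        (fun x hx k => Subgroup.subset_closure ⟨x, hx, k, rfl⟩) fun a b ha hb => ⟨?_, ?_⟩
      · refine conjDisplacement_mem_of_conj ?_ ha hb
        rw [← hL, apply_eq_conj_of_mem_opAut hL (hAut a)]
      · refine conjDisplacement_mem_of_inv_conj ?_ ha hb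
        rw [apply_eq_conj_of_mem_opAut hL (inv_mem (hAut a)), inv_inv]
    rw [Subgroup.closure_le]
    rintro _ ⟨x, y, rfl⟩
    rw [mul_inv_eq_conjDisplacement_zero (z := z)]
    exact mul_mem (hmem x 0) (inv_mem (hmem y 0))
  · rw [Subgroup.closure_le]
    rintro _ ⟨x, -, k, rfl⟩
    refine Subgroup.subset_closure ⟨(L z ^ k) x, z, ?_⟩
    rw [apply_eq_conj_of_mem_opAut hL (zpow_mem (hAut z) k), zpow_neg]
    group

/-- Let `Q` be a medial quandle generated by `X`, and `z ∈ X`. Then `Dis(Q)` is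
generated by the conjugates `L^k (L x * (L z)⁻¹) L^{-k}` for `x ∈ X`, `k ∈ ℤ`,
where conjugation by a left translation is independent of the translation. -/
theorem displacement_generators_of_generated_medial_quandle {Q : Type*}
    (op : Q → Q → Q)
    (L : Q → Equiv.Perm Q) (hL : ∀ x y, L x y = op x y)
    (hidem : ∀ x, op x x = x)
    (hldist : ∀ x y z, op x (op y z) = op (op x y) (op x z))
    (hmed : ∀ x y u v, op (op x y) (op u v) = op (op x u) (op y v))
    (X : Set Q) (z : Q) (hz : z ∈ X)
    (hgen : ∀ S : Set Q, X ⊆ S →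
      (∀ a b, a ∈ S → b ∈ S → op a b ∈ S ∧ (L a)⁻¹ b ∈ S) → ∀ q, q ∈ S) :
    Subgroup.closure {h : Equiv.Perm Q | ∃ x y : Q, h = L x * (L y)⁻¹} =
      Subgroup.closure {h : Equiv.Perm Q |
        ∃ x ∈ X, ∃ k : ℤ, h = (L z) ^ k * (L x * (L z)⁻¹) * (L z) ^ (-k)} :=
  displacement_generators_of_generated_medial_quandle_general op L hL hldist X z hgen
end

section
/- Let M be the free ℤ[t,t^{-1}]-module on a basis indexed by X∖{z} for a set X with chosen element z, with e_z := 0. Then the set F = M × X with operation (a,i) * (b,j) = ((1−t)·a + t·b + e_i − e_j, j) is a medial quandle, with left division (a,i) \ (b,j) = ((1−t^{-1})·a + t^{-1}·(b + e_j − e_i), j). -/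
open LaurentPolynomial

/-- The standard basis vectors `e_i` of `⊕_{x ∈ X∖{z}} ℤ[t,t⁻¹]`, with `e_z = 0`. -/
noncomputable def freeMQ.e {X : Type*} [DecidableEq X] (z : X) (i : X) :
    {x : X // x ≠ z} →₀ LaurentPolynomial ℤ :=
  if h : i = z then 0 else Finsupp.single ⟨i, h⟩ 1

/-- The operation `(a,i) * (b,j) = ((1-t)·a + t·b + e_i - e_j, j)` on `M × X`. -/
noncomputable def freeMQ.op {X : Type*} [DecidableEq X] (z : X)
    (p q : ({x : X // x ≠ z} →₀ LaurentPolynomial ℤ) × X) :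
    ({x : X // x ≠ z} →₀ LaurentPolynomial ℤ) × X :=
  (((1 - T 1 : LaurentPolynomial ℤ)) • p.1 + (T 1 : LaurentPolynomial ℤ) • q.1 + freeMQ.e z p.2 - freeMQ.e z q.2, q.2)

/-- The left division `(a,i) \ (b,j) = ((1-t⁻¹)·a + t⁻¹·(b + e_j - e_i), j)` on `M × X`. -/
noncomputable def freeMQ.ld {X : Type*} [DecidableEq X] (z : X)
    (p q : ({x : X // x ≠ z} →₀ LaurentPolynomial ℤ) × X) :
    ({x : X // x ≠ z} →₀ LaurentPolynomial ℤ) × X :=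
  (((1 - T (-1) : LaurentPolynomial ℤ)) • p.1 + (T (-1) : LaurentPolynomial ℤ) • (q.1 + freeMQ.e z q.2 - freeMQ.e z p.2), q.2)

/-- `F = M × X` with the operation `(a,i)*(b,j) = ((1-t)·a + t·b + e_i - e_j, j)` is a
medial quandle, with left division given by `(a,i) \ (b,j) = ((1-t⁻¹)·a + t⁻¹·(b+e_j-e_i), j)`. -/
theorem freeMQ_is_medial_quandle {X : Type*} [DecidableEq X] (z : X) :
    (∀ p, freeMQ.op z p p = p) ∧
    (∀ p q r, freeMQ.op z p (freeMQ.op z q r) =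
      freeMQ.op z (freeMQ.op z p q) (freeMQ.op z p r)) ∧
    (∀ p q u v, freeMQ.op z (freeMQ.op z p q) (freeMQ.op z u v) =
      freeMQ.op z (freeMQ.op z p u) (freeMQ.op z q v)) ∧
    (∀ p q, freeMQ.op z p (freeMQ.ld z p q) = q ∧ freeMQ.ld z p (freeMQ.op z p q) = q) := by
  have huv : (T 1 : LaurentPolynomial ℤ) * T (-1) = 1 := by
    rw [← T_add]; norm_num
  refine ⟨?_, ?_, ?_, ?_⟩
  · rintro ⟨a, i⟩
    simp only [freeMQ.op, Prod.mk.injEq]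
    constructor
    · module
    · trivial
  · rintro ⟨a, i⟩ ⟨b, j⟩ ⟨c, k⟩
    simp only [freeMQ.op, Prod.mk.injEq]
    constructor
    · module
    · trivial
  · rintro ⟨a, i⟩ ⟨b, j⟩ ⟨c, k⟩ ⟨d, l⟩
    simp only [freeMQ.op, Prod.mk.injEq]
    constructor
    · module
    · trivial
  · rintro ⟨a, i⟩ ⟨b, j⟩
    constructor
    · simp only [freeMQ.op, freeMQ.ld, Prod.mk.injEq]
      refine ⟨?_, trivial⟩
      match_scalars <;> · first | linear_combination huv | linear_combination -huv | linear_combination 2*huv | linear_combination -2*huv | ring1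
    · simp only [freeMQ.op, freeMQ.ld, Prod.mk.injEq]
      refine ⟨?_, trivial⟩
      match_scalars <;> · first | linear_combination huv | linear_combination -huv | linear_combination 2*huv | linear_combination -2*huv | ring1
end

section
/- With F = M × X and operation (a,i)*(b,j) = ((1−t)·a + t·b + e_i − e_j, j) as above, the quandle F is generated by the set {(0,i) : i ∈ X}, and distinct generators (0,i), (0,j) with i ≠ j lie in distinct orbits of the displacement group. -/
open LaurentPolynomial

/-!
Fix a fibre `A = {a | (a, j) ∈ S}` of a subquandle `S` containing the generators. Left
multiplication and left division by `(0, j)` act on it as `t` and `t⁻¹`, so `A = t • A`, and hence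
the translation stabilizer of `A` is a `ℤ[t,t⁻¹]`-submodule. Left multiplication and division by
`(0, i)` show that `t⁻¹ • (e_j - e_i)` is a period of `A`; since `e_z = 0` the stabilizer then
contains every `e_i`, so it is all of `M`, and `A ∋ 0` is everything. The displacement group
preserves the second coordinate, which separates the generators' orbits.
-/

open scoped Pointwise

theorem Equiv.Perm.apply_eq_of_mem_closure {α β : Type*} (f : α → β) {s : Set (Equiv.Perm α)}
    (hs : ∀ h ∈ s, ∀ p, f (h p) = f p) {g : Equiv.Perm α} (hg : g ∈ Subgroup.closure s)
    (p : α) : f (g p) = f p := by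
  induction hg using Subgroup.closure_induction generalizing p with
  | mem h hh => exact hs h hh p
  | one => rfl
  | mul g h _ _ hg hh => rw [Equiv.Perm.mul_apply, hg, hh]
  | inv g _ hg => simpa using (hg (g⁻¹ p)).symm

theorem AddAction.smul_mem_stabilizer_set_iff {R M : Type*} [Monoid R] [AddGroup M]
    [DistribMulAction R M] {A : Set M} {u : R} (hu : IsUnit u)
    (hA : ∀ a, u • a ∈ A ↔ a ∈ A) {v : M} :
    u • v ∈ AddAction.stabilizer M A ↔ v ∈ AddAction.stabilizer M A := by
  obtain ⟨u, rfl⟩ := hu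
  simp only [AddAction.mem_stabilizer_set, vadd_eq_add]
  have hconj : ∀ y, (u : R) • v + (u : R) • y ∈ A ↔ v + y ∈ A := fun y => by
    rw [← smul_add, hA]
  constructor
  · intro h y
    rw [← hconj, h, hA]
  · intro h x
    obtain ⟨y, rfl⟩ : ∃ y, (u : R) • y = x := ⟨u⁻¹ • x, smul_inv_smul u x⟩
    rw [hconj, h, hA]

namespace LaurentPolynomial

theorem smul_mem_of_T_smul_mem_iff {M : Type*} [AddCommGroup M] [Module ℤ[T;T⁻¹] M]
    (V : AddSubgroup M) (hV : ∀ v, (T 1 : ℤ[T;T⁻¹]) • v ∈ V ↔ v ∈ V) (p : ℤ[T;T⁻¹])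
    {v : M} (hv : v ∈ V) : p • v ∈ V := by
  have hT : ∀ n : ℤ, ∀ v ∈ V, (T n : ℤ[T;T⁻¹]) • v ∈ V := by
    intro n
    induction n using Int.induction_on with
    | zero => simp
    | succ n ih =>
      intro v hv
      rw [T_add, mul_comm, mul_smul]
      exact (hV _).2 (ih v hv)
    | pred n ih =>
      intro v hv
      rw [← hV, smul_smul, ← T_add, add_sub_cancel]
      exact ih v hv
  induction p using LaurentPolynomial.induction_on' with
  | add p q hp hq => rw [add_smul]; exact V.add_mem hp hq
  | C_mul_T n c =>
    rw [mul_smul, eq_intCast C c, Int.cast_smul_eq_zsmul]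
    exact V.zsmul_mem (hT n v hv) c

end LaurentPolynomial

namespace freeMQ

variable {X : Type*} [DecidableEq X] (z : X)

@[simp]
theorem e_self : e z z = 0 := by simp [e]

theorem e_of_ne {i : X} (hi : i ≠ z) : e z i = Finsupp.single ⟨i, hi⟩ 1 := dif_neg hi

theorem op_zero_left (i j : X) (b : {x : X // x ≠ z} →₀ ℤ[T;T⁻¹]) :
    op z (0, i) (b, j) = ((T 1 : ℤ[T;T⁻¹]) • b + e z i - e z j, j) := by
  simp [op]

theorem ld_zero_left (i j : X) (b : {x : X // x ≠ z} →₀ ℤ[T;T⁻¹]) :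
    ld z (0, i) (b, j) = ((T (-1) : ℤ[T;T⁻¹]) • (b + e z j - e z i), j) := by
  simp [ld]

theorem snd_op_ld (u v p : ({x : X // x ≠ z} →₀ ℤ[T;T⁻¹]) × X) :
    (op z u (ld z v p)).2 = p.2 :=
  rfl

structure IsSubquandleContainingGenerators
    (S : Set (({x : X // x ≠ z} →₀ ℤ[T;T⁻¹]) × X)) : Prop where
  zero_mem : ∀ i : X, ((0 : {x : X // x ≠ z} →₀ ℤ[T;T⁻¹]), i) ∈ S
  op_mem : ∀ {p q}, p ∈ S → q ∈ S → op z p q ∈ S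
  ld_mem : ∀ {p q}, p ∈ S → q ∈ S → ld z p q ∈ S

namespace IsSubquandleContainingGenerators

variable {z} {S : Set (({x : X // x ≠ z} →₀ ℤ[T;T⁻¹]) × X)}

theorem T_smul_mem_iff (hS : IsSubquandleContainingGenerators z S) (j : X)
    (a : {x : X // x ≠ z} →₀ ℤ[T;T⁻¹]) :
    ((T 1 : ℤ[T;T⁻¹]) • a, j) ∈ S ↔ (a, j) ∈ S := by
  constructor
  · intro h
    have := hS.ld_mem (hS.zero_mem j) h
    rwa [ld_zero_left, add_sub_cancel_right, smul_smul, ← T_add, neg_add_cancel, T_zero,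
      one_smul] at this
  · intro h
    simpa [op_zero_left] using hS.op_mem (hS.zero_mem j) h

theorem T_inv_smul_e_sub_mem_stabilizer (hS : IsSubquandleContainingGenerators z S)
    (i j : X) :
    (T (-1) : ℤ[T;T⁻¹]) • (e z j - e z i) ∈
      AddAction.stabilizer ({x : X // x ≠ z} →₀ ℤ[T;T⁻¹]) {a | (a, j) ∈ S} := by
  rw [AddAction.mem_stabilizer_set]
  intro a
  simp only [Set.mem_ofPred_eq, vadd_eq_add]
  constructor
  · intro h
    rw [← hS.T_smul_mem_iff]
    have := hS.op_mem (hS.zero_mem i) h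
    rw [op_zero_left] at this
    convert this using 2
    simp only [smul_add, smul_sub, smul_smul, ← T_add]
    norm_num
    abel
  · intro h
    have := hS.ld_mem (hS.zero_mem i) ((hS.T_smul_mem_iff j a).2 h)
    rw [ld_zero_left] at this
    convert this using 2
    simp only [smul_add, smul_sub, smul_smul, ← T_add]
    norm_num
    abel

theorem stabilizer_fibre_eq_top (hS : IsSubquandleContainingGenerators z S) (j : X) :
    AddAction.stabilizer ({x : X // x ≠ z} →₀ ℤ[T;T⁻¹]) {a | (a, j) ∈ S} = ⊤ := by
  set P := AddAction.stabilizer ({x : X // x ≠ z} →₀ ℤ[T;T⁻¹]) {a | (a, j) ∈ S}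
  have hsmul : ∀ (p : ℤ[T;T⁻¹]) {v}, v ∈ P → p • v ∈ P :=
    LaurentPolynomial.smul_mem_of_T_smul_mem_iff P fun _ =>
      AddAction.smul_mem_stabilizer_set_iff (isUnit_T 1) (hS.T_smul_mem_iff j)
  have he_sub : ∀ i, e z j - e z i ∈ P := fun i => by
    have := hsmul (T 1) (hS.T_inv_smul_e_sub_mem_stabilizer i j)
    rwa [smul_smul, ← T_add, add_neg_cancel, T_zero, one_smul] at this
  have he : ∀ i, e z i ∈ P := fun i => by
    simpa using P.sub_mem (he_sub z) (he_sub i)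
  rw [eq_top_iff]
  rintro a -
  induction a using Finsupp.induction_linear with
  | zero => exact P.zero_mem
  | add f g hf hg => exact P.add_mem hf hg
  | single x p =>
    simpa [e_of_ne z x.2, Finsupp.smul_single] using hsmul p (he x)

theorem eq_univ (hS : IsSubquandleContainingGenerators z S) : S = Set.univ := by
  refine Set.eq_univ_of_forall fun ⟨a, j⟩ => ?_
  have ha : a ∈ AddAction.stabilizer _ {a | (a, j) ∈ S} := by
    rw [hS.stabilizer_fibre_eq_top j]
    trivial
  simpa using (AddAction.mem_stabilizer_set.1 ha 0).2 (hS.zero_mem j)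

end IsSubquandleContainingGenerators

end freeMQ

/-- `F = M × X` is generated as a quandle by `{(0,i) : i ∈ X}`, and distinct
generators lie in distinct orbits of the displacement group. -/
theorem freeMQ_generated_and_orbits {X : Type*} [DecidableEq X] (z : X) :
    (∀ S : Set (({x : X // x ≠ z} →₀ LaurentPolynomial ℤ) × X),
      (∀ i : X, ((0 : {x : X // x ≠ z} →₀ LaurentPolynomial ℤ), i) ∈ S) →
      (∀ p q, p ∈ S → q ∈ S → freeMQ.op z p q ∈ S ∧ freeMQ.ld z p q ∈ S) →
      ∀ p, p ∈ S) ∧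
    (∀ i j : X, i ≠ j →
      ∀ g ∈ Subgroup.closure {h : Equiv.Perm (({x : X // x ≠ z} →₀ LaurentPolynomial ℤ) × X) |
          ∃ u v, ∀ p, h p = freeMQ.op z u (freeMQ.ld z v p)},
        g ((0 : {x : X // x ≠ z} →₀ LaurentPolynomial ℤ), i) ≠
          ((0 : {x : X // x ≠ z} →₀ LaurentPolynomial ℤ), j)) := by
  refine ⟨fun S hgen hcl p => ?_, ?_⟩
  · have hS : freeMQ.IsSubquandleContainingGenerators z S :=
      ⟨hgen, fun hp hq => (hcl _ _ hp hq).1, fun hp hq => (hcl _ _ hp hq).2⟩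
    rw [hS.eq_univ]
    trivial
  · intro i j hij g hg hgij
    have hsnd := Equiv.Perm.apply_eq_of_mem_closure Prod.snd
      (by rintro _ ⟨u, v, hh⟩ p; rw [hh, freeMQ.snd_op_ld]) hg (0, i)
    rw [hgij] at hsnd
    exact hij hsnd.symm
end

section
/- With F = M × X as above, for all (a,i),(b,j),(c,k) ∈ F: L_{(a,i)} L_{(b,j)}^{-1} ((c,k)) = (c + (1−t)·(a−b) + e_i − e_j, k). In particular the displacement group of F acts freely on F, and on each fiber M × {k} the action is by translations of M. -/
open LaurentPolynomial

/-! Because `t · t⁻¹ = 1`, each generator `L_u L_v⁻¹` moves `(c, k)` to `(c + m, k)` with `m`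
independent of `(c, k)`. Such fibrewise translations form a subgroup, and a translation with a
fixed point is trivial. -/

section FiberwiseTranslations

variable (M X : Type*) [AddGroup M]

def fiberwiseTranslations : Subgroup (Equiv.Perm (M × X)) where
  carrier := {g | ∃ m : M, ∀ c k, g (c, k) = (c + m, k)}
  one_mem' := ⟨0, fun c k => by simp⟩
  mul_mem' := by
    rintro g h ⟨m, hm⟩ ⟨n, hn⟩
    exact ⟨n + m, fun c k => by rw [Equiv.Perm.mul_apply, hn, hm, add_assoc]⟩
  inv_mem' := by
    rintro g ⟨m, hm⟩
    refine ⟨-m, fun c k => ?_⟩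
    rw [Equiv.Perm.inv_eq_iff_eq, hm, neg_add_cancel_right]

variable {M X}

theorem eq_one_of_mem_fiberwiseTranslations_of_apply_eq {g : Equiv.Perm (M × X)}
    (hg : g ∈ fiberwiseTranslations M X) {p : M × X} (hp : g p = p) : g = 1 := by
  obtain ⟨m, hm⟩ := hg
  have hm0 : m = 0 := by
    have := congrArg Prod.fst ((hm p.1 p.2).symm.trans hp)
    simpa using this
  ext ⟨c, k⟩ <;> simp [hm, hm0]

end FiberwiseTranslations

theorem freeMQ.op_ld {X : Type*} [DecidableEq X] (z : X)
    (a b c : {x : X // x ≠ z} →₀ LaurentPolynomial ℤ) (i j k : X) :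
    freeMQ.op z (a, i) (freeMQ.ld z (b, j) (c, k)) =
      (c + ((1 - T 1 : LaurentPolynomial ℤ)) • (a - b) + freeMQ.e z i - freeMQ.e z j, k) := by
  have hT : (T 1 : LaurentPolynomial ℤ) * T (-1) = 1 := by rw [← T_add, add_neg_cancel, T_zero]
  refine Prod.ext ?_ rfl
  simp only [freeMQ.op, freeMQ.ld, smul_add, smul_sub, smul_smul, hT, mul_sub, mul_one, one_smul]
  module

theorem freeMQ.closure_le_fiberwiseTranslations {X : Type*} [DecidableEq X] (z : X) :
    Subgroup.closure {h : Equiv.Perm (({x : X // x ≠ z} →₀ LaurentPolynomial ℤ) × X) |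
        ∃ u v, ∀ p, h p = freeMQ.op z u (freeMQ.ld z v p)} ≤ fiberwiseTranslations _ X := by
  rw [Subgroup.closure_le]
  rintro h ⟨⟨a, i⟩, ⟨b, j⟩, huv⟩
  refine ⟨(1 - T 1 : LaurentPolynomial ℤ) • (a - b) + freeMQ.e z i - freeMQ.e z j, fun c k => ?_⟩
  rw [huv, freeMQ.op_ld, add_sub_assoc, add_sub_assoc, add_assoc]

/-- In `F = M × X`: `L_{(a,i)} L_{(b,j)}⁻¹ ((c,k)) = (c + (1-t)·(a-b) + e_i - e_j, k)`;
the displacement group acts freely on `F`, and acts on each fiber `M × {k}` by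
translations of `M`. -/
theorem freeMQ_displacement_action {X : Type*} [DecidableEq X] (z : X) :
    (∀ (a b c : {x : X // x ≠ z} →₀ LaurentPolynomial ℤ) (i j k : X),
      freeMQ.op z (a, i) (freeMQ.ld z (b, j) (c, k)) =
        (c + ((1 - T 1 : LaurentPolynomial ℤ)) • (a - b) + freeMQ.e z i - freeMQ.e z j, k)) ∧
    (∀ g ∈ Subgroup.closure {h : Equiv.Perm (({x : X // x ≠ z} →₀ LaurentPolynomial ℤ) × X) |
        ∃ u v, ∀ p, h p = freeMQ.op z u (freeMQ.ld z v p)},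
      (∃ p, g p = p) → g = 1) ∧
    (∀ g ∈ Subgroup.closure {h : Equiv.Perm (({x : X // x ≠ z} →₀ LaurentPolynomial ℤ) × X) |
        ∃ u v, ∀ p, h p = freeMQ.op z u (freeMQ.ld z v p)},
      ∃ m : {x : X // x ≠ z} →₀ LaurentPolynomial ℤ,
        ∀ (c : {x : X // x ≠ z} →₀ LaurentPolynomial ℤ) (k : X), g (c, k) = (c + m, k)) :=
  ⟨freeMQ.op_ld z,
    fun _g hg ⟨_p, hp⟩ =>
      eq_one_of_mem_fiberwiseTranslations_of_apply_eq (freeMQ.closure_le_fiberwiseTranslations z hg) hp,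
    fun _g hg => freeMQ.closure_le_fiberwiseTranslations z hg⟩
end

section
/- Let Q be a medial quandle that is both left and right cancellative. Then for each x ∈ Q the right translation R_x is an injective quandle endomorphism of Q, so Q embeds into its orbit Qx. -/
/-- In a cancellative medial quandle `Q`, each right translation `R_x` is an
injective quandle endomorphism, and it maps `Q` into the orbit of `x` under the
displacement group; hence `Q` embeds into its orbit `Qx`. -/
theorem cancellative_medial_quandle_embeds_into_orbit {Q : Type*}
    (op ld : Q → Q → Q)
    (hidem : ∀ x, op x x = x)
    (hldist : ∀ x y w, op x (op y w) = op (op x y) (op x w))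
    (hld1 : ∀ x y, op x (ld x y) = y) (hld2 : ∀ x y, ld x (op x y) = y)
    (hmed : ∀ x y u v, op (op x y) (op u v) = op (op x u) (op y v))
    (hrc : ∀ a b x, op a x = op b x → a = b)
    (hlc : ∀ x a b, op x a = op x b → a = b) :
    ∀ x : Q, Function.Injective (fun y => op y x) ∧
      (∀ a b, op (op a b) x = op (op a x) (op b x)) ∧
      (∀ y, ∃ g ∈ Subgroup.closure {h : Equiv.Perm Q | ∃ u v, ∀ p, h p = op u (ld v p)},
        g x = op y x) := by
  intro x
  refine ⟨fun a b h => hrc a b x h, fun a b => ?_, fun y => ?_⟩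
  · calc op (op a b) x = op (op a b) (op x x) := by rw [hidem]
      _ = op (op a x) (op b x) := hmed a b x x
  · refine ⟨⟨fun p => op y (ld x p), fun p => op x (ld y p), fun p => ?_, fun p => ?_⟩,
      Subgroup.subset_closure ⟨y, x, fun _ => rfl⟩, ?_⟩
    · simp only [hld2, hld1]
    · simp only [hld2, hld1]
    · have hxx : ld x x = x := hlc x _ _ (by rw [hld1, hidem])
      simp only [Equiv.coe_fn_mk, hxx]
end

section
/- The free medial quandle on a set X is isomorphic to the subquandle Q of the affine quandle Aff(⊕_{x ∈ X∖{z}} ℤ[t,t^{-1}], t) consisting of those elements a with Λ(a) = e_i for some i ∈ X, where Λ is induced by the evaluation t ↦ 1; equivalently Q = {a : a ≡ e_i mod (1−t) for some i ∈ X}. Moreover Q is generated by {e_i : i ∈ X}. -/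
open LaurentPolynomial

/-- The standard basis vectors `e_i` of `⊕_{x ∈ X∖{z}} ℤ[t,t⁻¹]`, with `e_z = 0`. -/
noncomputable def affMQ.e {X : Type*} [DecidableEq X] (z : X) (i : X) :
    {x : X // x ≠ z} →₀ LaurentPolynomial ℤ :=
  if h : i = z then 0 else Finsupp.single ⟨i, h⟩ 1

/-- The affine quandle operation `a * b = (1-t)·a + t·b` on `⊕_{x ∈ X∖{z}} ℤ[t,t⁻¹]`. -/
noncomputable def affMQ.op {X : Type*} [DecidableEq X] (z : X)
    (a b : {x : X // x ≠ z} →₀ LaurentPolynomial ℤ) :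
    {x : X // x ≠ z} →₀ LaurentPolynomial ℤ :=
  ((1 - T 1 : LaurentPolynomial ℤ)) • a + (T 1 : LaurentPolynomial ℤ) • b

/-- The left division `a \ b = (1-t⁻¹)·a + t⁻¹·b` in the affine quandle. -/
noncomputable def affMQ.ld {X : Type*} [DecidableEq X] (z : X)
    (a b : {x : X // x ≠ z} →₀ LaurentPolynomial ℤ) :
    {x : X // x ≠ z} →₀ LaurentPolynomial ℤ :=
  ((1 - T (-1) : LaurentPolynomial ℤ)) • a + (T (-1) : LaurentPolynomial ℤ) • b

/-- The subset `S = {a : a ≡ e_i mod (1-t) for some i ∈ X}` of the affine quandle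
`Aff(⊕_{x ∈ X∖{z}} ℤ[t,t⁻¹], t)` (equivalently, those `a` with `Λ(a) = e_i` for the
evaluation `t ↦ 1`). -/
def affMQ.S {X : Type*} [DecidableEq X] (z : X) :
    Set ({x : X // x ≠ z} →₀ LaurentPolynomial ℤ) :=
  {a | ∃ (i : X) (m : {x : X // x ≠ z} →₀ LaurentPolynomial ℤ),
    a = affMQ.e z i + ((1 - T 1 : LaurentPolynomial ℤ)) • m}


/-!
The displacement group `Dis = ⟨L x * (L o)⁻¹⟩` of a medial quandle, where `L x = (x ◃ ·)` and
`o = ψ z`, is abelian, and conjugation by `L o` makes it a `ℤ[t,t⁻¹]`-module. On `Dis`-orbits the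
operation is affine: with `τ x = L x * (L o)⁻¹` and `c π = L o * π * (L o)⁻¹`,
`π p ◃ ρ q = (τ p * π * (c π)⁻¹ * c ρ * (τ q)⁻¹) q`. Every element of `S` is uniquely
`e i + (1 - t) m`, so `Ψ (e i + (1 - t) m) = δ m (ψ i)`, where `δ` is the module map with
`δ (e x) = τ (ψ x)`, is well defined, and the affine formula makes it a homomorphism.

Since `e z = 0`, the operations `e z ◃ ·` and `e z \ ·` are multiplication by `t` and `t⁻¹`, and
`e x ◃ (e z \ ·)` is translation by `(1 - t) e x`. Hence a set containing the `e i` and closed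
under `◃` and `\` is invariant under translation by all of `(1 - t) A`, so it contains `S`. This
also gives uniqueness of `Ψ`.
-/

open scoped Quandles Pointwise IsMulCommutative

namespace LaurentPolynomial

theorem not_isUnit_one_sub_T_one : ¬IsUnit (1 - T 1 : ℤ[T;T⁻¹]) := fun h => by
  simpa using h.map (eval₂ (RingHom.id ℤ) 1)

theorem one_sub_T_one_ne_zero : (1 - T 1 : ℤ[T;T⁻¹]) ≠ 0 := by
  rw [sub_ne_zero, ← T_zero]
  exact fun h => zero_ne_one ((AddMonoidAlgebra.single_left_inj one_ne_zero).1 h)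

section Semiring

variable {R : Type*} [Semiring R]

theorem T_one_mul_T_neg_one : (T 1 * T (-1) : R[T;T⁻¹]) = 1 := by
  rw [← T_add, add_neg_cancel, T_zero]

section AddCommMonoid

variable {M : Type*} [AddCommMonoid M] [Module R[T;T⁻¹] M]

@[simp]
theorem T_smul_T_neg_smul (n : ℤ) (x : M) : (T n : R[T;T⁻¹]) • (T (-n) : R[T;T⁻¹]) • x = x := by
  rw [smul_smul, ← T_add, add_neg_cancel, T_zero, one_smul]

@[simp]
theorem T_neg_smul_T_smul (n : ℤ) (x : M) : (T (-n) : R[T;T⁻¹]) • (T n : R[T;T⁻¹]) • x = x := by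
  rw [smul_smul, ← T_add, neg_add_cancel, T_zero, one_smul]

end AddCommMonoid

theorem T_smul_mem_stabilizer {M : Type*} [AddCommGroup M] [Module R[T;T⁻¹] M] {s : Set M}
    {n : ℤ} (hs : ∀ b, (T n : R[T;T⁻¹]) • b ∈ s ↔ b ∈ s) {v : M}
    (hv : v ∈ AddAction.stabilizer M s) : (T n : R[T;T⁻¹]) • v ∈ AddAction.stabilizer M s := by
  refine AddAction.mem_stabilizer_set.2 fun b => ?_
  calc T n • v + b ∈ s ↔ T n • (v + T (-n) • b) ∈ s := by rw [smul_add, T_smul_T_neg_smul]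
    _ ↔ T (-n) • b ∈ s := (hs _).trans (AddAction.mem_stabilizer_set.1 hv _)
    _ ↔ b ∈ s := by rw [← hs, T_smul_T_neg_smul]

end Semiring

section AddSubgroup

variable {M : Type*} [AddCommGroup M] [Module ℤ[T;T⁻¹] M] {G : AddSubgroup M}
  (hT : ∀ v ∈ G, (T 1 : ℤ[T;T⁻¹]) • v ∈ G) (hT' : ∀ v ∈ G, (T (-1) : ℤ[T;T⁻¹]) • v ∈ G)
include hT hT'

theorem T_smul_mem (n : ℤ) {v : M} (hv : v ∈ G) : (T n : ℤ[T;T⁻¹]) • v ∈ G := by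
  induction n using Int.induction_on with
  | zero => simpa using hv
  | succ n ih => rw [add_comm, T_add, mul_smul]; exact hT _ ih
  | pred n ih => rw [sub_eq_add_neg, add_comm, T_add, mul_smul]; exact hT' _ ih

theorem smul_mem_of_T_smul_mem (p : ℤ[T;T⁻¹]) {v : M} (hv : v ∈ G) : p • v ∈ G := by
  induction p using LaurentPolynomial.induction_on' with
  | add p q hp hq => rw [add_smul]; exact G.add_mem hp hq
  | C_mul_T n a =>
    rw [mul_smul, eq_intCast C, Int.cast_smul_eq_zsmul]
    exact G.zsmul_mem (T_smul_mem hT hT' n hv) a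

end AddSubgroup

end LaurentPolynomial

section LinearExtension

variable {R M ι : Type*} [Semiring R] [AddCommMonoid M]

/-- `Finsupp.linearCombination` for the module structure on `M` induced by `φ`. -/
noncomputable def Finsupp.liftEnd (φ : R →+* AddMonoid.End M) (v : ι → M) : (ι →₀ R) →+ M :=
  Finsupp.liftAddHom fun x => (AddMonoidHom.eval (v x)).comp (φ : R →+ AddMonoid.End M)

variable (φ : R →+* AddMonoid.End M) (v : ι → M)

@[simp]
theorem Finsupp.liftEnd_single (x : ι) (p : R) :
    Finsupp.liftEnd φ v (Finsupp.single x p) = φ p (v x) :=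
  Finsupp.liftAddHom_apply_single _ x p

theorem Finsupp.liftEnd_smul (p : R) (m : ι →₀ R) :
    Finsupp.liftEnd φ v (p • m) = φ p (Finsupp.liftEnd φ v m) := by
  induction m using Finsupp.induction_linear with
  | zero => simp
  | add m n hm hn => simp [smul_add, hm, hn]
  | single x q => rw [Finsupp.smul_single', liftEnd_single, liftEnd_single, map_mul]; rfl

end LinearExtension

noncomputable def MulAut.laurentHom {G : Type*} [CommGroup G] (c : MulAut G) :
    ℤ[T;T⁻¹] →+* AddMonoid.End (Additive G) :=
  (AddMonoidAlgebra.lift ℤ (AddMonoid.End (Additive G)) ℤ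
    ((monoidEndToAdditive G).toMonoidHom.comp
      ((MulDistribMulAction.toMonoidEnd (MulAut G) G).comp (zpowersHom (MulAut G) c)))).toRingHom

@[simp]
theorem MulAut.laurentHom_T_one {G : Type*} [CommGroup G] (c : MulAut G) (x : Additive G) :
    c.laurentHom (T 1) x = Additive.ofMul (c x.toMul) := by
  rw [MulAut.laurentHom, T, AlgHom.toRingHom_eq_coe, RingHom.coe_coe,
    AddMonoidAlgebra.lift_single, one_smul]
  rfl

noncomputable abbrev Quandle.ofExistsUnique {Q : Type*} (op : Q → Q → Q)
    (idem : ∀ x, op x x = x) (ldist : ∀ x y w, op x (op y w) = op (op x y) (op x w))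
    (ldiv : ∀ x y, ∃! u, op x u = y) : Quandle Q where
  act := op
  self_distrib := ldist _ _ _
  invAct x y := (ldiv x y).choose
  left_inv x y := ((ldiv x (op x y)).choose_spec.2 y rfl).symm
  right_inv x y := (ldiv x y).choose_spec.1
  fix := idem _

namespace Rack

open Subgroup

variable {R : Type*} [Rack R]

theorem act'_apply_of_mem_closure {π : Equiv.Perm R} (hπ : π ∈ closure (Set.range act'))
    (x : R) : act' (π x) = π * act' x * π⁻¹ := by
  induction hπ using closure_induction generalizing x with
  | mem _ h => obtain ⟨y, rfl⟩ := h; exact ad_conj y x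
  | one => simp
  | mul π ρ _ _ hπ hρ => rw [Equiv.Perm.mul_apply, hπ, hρ]; group
  | inv π _ hπ =>
    obtain ⟨y, rfl⟩ := π.surjective x
    rw [Equiv.Perm.coe_inv, Equiv.symm_apply_apply, hπ]
    group

/-- The displacement group `Dis(R)`: it also contains every `act' x * (act' y)⁻¹`. -/
def dis (o : R) : Subgroup (Equiv.Perm R) :=
  closure (Set.range fun x => act' x * (act' o)⁻¹)

theorem act'_mul_inv_mem_dis (o x : R) : act' x * (act' o)⁻¹ ∈ dis o :=
  subset_closure ⟨x, rfl⟩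

theorem dis_le_closure_range_act' (o : R) : dis o ≤ closure (Set.range act') :=
  closure_le _ |>.2 <| Set.range_subset_iff.2 fun x =>
    mul_mem (subset_closure ⟨x, rfl⟩) (inv_mem (subset_closure ⟨o, rfl⟩))

theorem map_conj_dis (o : R) : (dis o).map (MulAut.conj (act' o)).toMonoidHom = dis o := by
  rw [dis, MonoidHom.map_closure, ← Set.range_comp,
    ← (act' o).surjective.range_comp fun x => act' x * (act' o)⁻¹]
  congr 2 with x
  simp [ad_conj, mul_assoc]

def conjDis (o : R) : MulAut (dis o) :=
  ((MulAut.conj (act' o)).subgroupMap (dis o)).trans (MulEquiv.subgroupCongr (map_conj_dis o))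

@[simp]
theorem coe_conjDis_apply (o : R) (π : dis o) :
    (conjDis o π : Equiv.Perm R) = act' o * π * (act' o)⁻¹ :=
  rfl

/-- `Rack.IsAbelian` is mediality: `(x ◃ y) ◃ (z ◃ w) = (x ◃ z) ◃ (y ◃ w)`. -/
theorem IsAbelian.act'_mul_inv_mul_comm (h : IsAbelian R) (x y w : R) :
    act' y * (act' x)⁻¹ * act' w = act' w * (act' x)⁻¹ * act' y := by
  have hmed : act' (x ◃ y) * act' w = act' (x ◃ w) * act' y := by
    ext v; exact h x y w v
  rw [ad_conj, ad_conj] at hmed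
  simpa [mul_assoc] using hmed

theorem IsAbelian.isMulCommutative_dis (h : IsAbelian R) (o : R) : IsMulCommutative (dis o) :=
  isMulCommutative_closure <| by
    rintro _ ⟨x, rfl⟩ _ ⟨y, rfl⟩
    simp only [← mul_assoc, h.act'_mul_inv_mul_comm o x y]

end Rack

namespace Quandle

open Rack

variable {Q : Type*} [Quandle Q] {o : Q} [IsMulCommutative (dis o)]

theorem act_apply_of_mem_dis {π : Equiv.Perm Q} (hπ : π ∈ dis o) (ρ : Equiv.Perm Q) (p q : Q) :
    π p ◃ ρ q = (act' p * (act' o)⁻¹ * π * (act' o * π * (act' o)⁻¹)⁻¹ *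
      (act' o * ρ * (act' o)⁻¹) * (act' q * (act' o)⁻¹)⁻¹) q := by
  have hcomm : act' p * (act' o)⁻¹ * π = π * (act' p * (act' o)⁻¹) :=
    congrArg Subtype.val (mul_comm (⟨_, act'_mul_inv_mem_dis o p⟩ : dis o) ⟨π, hπ⟩)
  have hperm : act' p * (act' o)⁻¹ * π * (act' o * π * (act' o)⁻¹)⁻¹ *
      (act' o * ρ * (act' o)⁻¹) * (act' q * (act' o)⁻¹)⁻¹ =
        π * act' p * π⁻¹ * ρ * (act' q)⁻¹ := by
    calc _ = act' p * (act' o)⁻¹ * π * act' o * π⁻¹ * ρ * (act' q)⁻¹ := by group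
      _ = _ := by rw [hcomm]; group
  rw [hperm, ← act'_apply, act'_apply_of_mem_closure (dis_le_closure_range_act' o hπ)]
  simp

end Quandle

namespace affMQ

variable {X : Type*} (z : X)

section Displacement

open Rack

variable {Q : Type*} [Quandle Q] (ψ : X → Q) [IsMulCommutative (dis (ψ z))]

noncomputable def displacement (m : {x : X // x ≠ z} →₀ ℤ[T;T⁻¹]) : Equiv.Perm Q :=
  (Finsupp.liftEnd (conjDis (ψ z)).laurentHom
    (fun x : {x : X // x ≠ z} =>
      Additive.ofMul ⟨act' (ψ x) * (act' (ψ z))⁻¹, act'_mul_inv_mem_dis _ _⟩) m).toMul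

theorem displacement_mem (m : {x : X // x ≠ z} →₀ ℤ[T;T⁻¹]) :
    displacement z ψ m ∈ dis (ψ z) :=
  Subtype.prop _

theorem displacement_add (m n : {x : X // x ≠ z} →₀ ℤ[T;T⁻¹]) :
    displacement z ψ (m + n) = displacement z ψ m * displacement z ψ n := by
  simp [displacement]

theorem displacement_sub (m n : {x : X // x ≠ z} →₀ ℤ[T;T⁻¹]) :
    displacement z ψ (m - n) = displacement z ψ m * (displacement z ψ n)⁻¹ := by
  simp [displacement, div_eq_mul_inv]

theorem displacement_T_one_smul (m : {x : X // x ≠ z} →₀ ℤ[T;T⁻¹]) :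
    displacement z ψ ((T 1 : ℤ[T;T⁻¹]) • m) =
      act' (ψ z) * displacement z ψ m * (act' (ψ z))⁻¹ := by
  simp [displacement, Finsupp.liftEnd_smul]

end Displacement

variable [DecidableEq X]

theorem e_self : e z z = 0 := dif_pos rfl

theorem e_coe (x : {x : X // x ≠ z}) : e z x = Finsupp.single x 1 := dif_neg x.2

theorem e_apply (i : X) (x : {x : X // x ≠ z}) : e z i x = if x.1 = i then 1 else 0 := by
  by_cases hi : i = z
  · subst hi
    simp [e_self, x.2]
  · rw [e, dif_neg hi, Finsupp.single_apply]
    simp [Subtype.ext_iff, eq_comm]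

theorem e_mem_S (i : X) : e z i ∈ S z := ⟨i, 0, by simp⟩

theorem op_e_add_smul (i j : X) (m n : {x : X // x ≠ z} →₀ ℤ[T;T⁻¹]) :
    op z (e z i + (1 - T 1 : ℤ[T;T⁻¹]) • m) (e z j + (1 - T 1 : ℤ[T;T⁻¹]) • n) =
      e z j + (1 - T 1 : ℤ[T;T⁻¹]) •
        (e z i + m - (T 1 : ℤ[T;T⁻¹]) • m + (T 1 : ℤ[T;T⁻¹]) • n - e z j) := by
  unfold op
  module

theorem ld_e_add_smul (i j : X) (m n : {x : X // x ≠ z} →₀ ℤ[T;T⁻¹]) :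
    ld z (e z i + (1 - T 1 : ℤ[T;T⁻¹]) • m) (e z j + (1 - T 1 : ℤ[T;T⁻¹]) • n) =
      e z j + (1 - T 1 : ℤ[T;T⁻¹]) • ((T (-1) : ℤ[T;T⁻¹]) • (e z j - e z i + n - m) + m) := by
  unfold ld
  linear_combination (norm := module) (T_one_mul_T_neg_one (R := ℤ)) • (e z j - e z i)

theorem op_mem_S {a b : {x : X // x ≠ z} →₀ ℤ[T;T⁻¹]} (ha : a ∈ S z) (hb : b ∈ S z) :
    op z a b ∈ S z := by
  obtain ⟨i, m, rfl⟩ := ha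
  obtain ⟨j, n, rfl⟩ := hb
  exact ⟨j, _, op_e_add_smul z i j m n⟩

theorem ld_mem_S {a b : {x : X // x ≠ z} →₀ ℤ[T;T⁻¹]} (ha : a ∈ S z) (hb : b ∈ S z) :
    ld z a b ∈ S z := by
  obtain ⟨i, m, rfl⟩ := ha
  obtain ⟨j, n, rfl⟩ := hb
  exact ⟨j, _, ld_e_add_smul z i j m n⟩

theorem op_ld (a b : {x : X // x ≠ z} →₀ ℤ[T;T⁻¹]) : op z a (ld z a b) = b := by
  unfold op ld
  linear_combination (norm := module) (T_one_mul_T_neg_one (R := ℤ)) • (b - a)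

/-- `i` is read off from the coordinate `i` at `t = 1`, and `1 - t` is not a zero divisor. -/
theorem injective_e_add_smul : Function.Injective
    fun p : X × ({x : X // x ≠ z} →₀ ℤ[T;T⁻¹]) => e z p.1 + (1 - T 1 : ℤ[T;T⁻¹]) • p.2 := by
  rintro ⟨i, m⟩ ⟨j, n⟩ h
  have hij : i = j := by
    by_contra hij
    wlog hi : i ≠ z generalizing i j m n
    · exact this j n i m h.symm (Ne.symm hij) fun hj => hij (by rw [not_not.1 hi, hj])
    have hx := congrArg (fun a => a ⟨i, hi⟩) h
    simp [e_apply, hij] at hx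
    exact not_isUnit_one_sub_T_one
      (.of_mul_eq_one (n ⟨i, hi⟩ - m ⟨i, hi⟩) (by linear_combination -hx))
  subst hij
  simpa using smul_right_injective _ one_sub_T_one_ne_zero (add_left_cancel h)

section Generation

variable {z} {s : Set ({x : X // x ≠ z} →₀ ℤ[T;T⁻¹])} (he : ∀ i, e z i ∈ s)
  (hcl : ∀ a b, a ∈ s → b ∈ s → op z a b ∈ s ∧ ld z a b ∈ s)
include he hcl

theorem T_one_smul_mem_iff (b : {x : X // x ≠ z} →₀ ℤ[T;T⁻¹]) :
    (T 1 : ℤ[T;T⁻¹]) • b ∈ s ↔ b ∈ s := by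
  refine ⟨fun h => ?_, fun h => ?_⟩
  · simpa [ld, e_self] using (hcl _ _ (he z) h).2
  · simpa [op, e_self] using (hcl _ _ (he z) h).1

theorem T_neg_one_smul_mem_iff (b : {x : X // x ≠ z} →₀ ℤ[T;T⁻¹]) :
    (T (-1) : ℤ[T;T⁻¹]) • b ∈ s ↔ b ∈ s := by
  rw [← T_one_smul_mem_iff he hcl, T_smul_T_neg_smul]

/-- As `e z = 0`, translation by `(1 - t) • e x` is `b ↦ e x ◃ (e z \ b)`, with inverse
`b ↦ e z ◃ (e x \ b)`. -/
theorem one_sub_T_one_smul_e_mem_stabilizer (x : {x : X // x ≠ z}) :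
    (1 - T 1 : ℤ[T;T⁻¹]) • e z x ∈ AddAction.stabilizer _ s := by
  refine AddAction.mem_stabilizer_set.2 fun b => ⟨fun h => ?_, fun h => ?_⟩
  · have hb : op z (e z z) (ld z (e z x) ((1 - T 1 : ℤ[T;T⁻¹]) • e z x +ᵥ b)) = b := by
      simp only [op, ld, e_self, vadd_eq_add]
      linear_combination (norm := module)
        (T_one_mul_T_neg_one (R := ℤ)) • (b - (T 1 : ℤ[T;T⁻¹]) • e z x)
    exact hb ▸ (hcl _ _ (he z) (hcl _ _ (he x) h).2).1
  · have hb : op z (e z x) (ld z (e z z) b) = (1 - T 1 : ℤ[T;T⁻¹]) • e z x +ᵥ b := by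
      simp only [op, ld, e_self, vadd_eq_add]
      linear_combination (norm := module) (T_one_mul_T_neg_one (R := ℤ)) • b
    exact hb ▸ (hcl _ _ (he x) (hcl _ _ (he z) h).2).1

theorem S_subset_of_closed : S z ⊆ s := by
  rintro _ ⟨i, m, rfl⟩
  have hm : (1 - T 1 : ℤ[T;T⁻¹]) • m ∈ AddAction.stabilizer _ s := by
    induction m using Finsupp.induction_linear with
    | zero => rw [smul_zero]; exact zero_mem _
    | add m n hm hn => rw [smul_add]; exact add_mem hm hn
    | single x p =>
      have hx : (1 - T 1 : ℤ[T;T⁻¹]) • Finsupp.single x p = p • (1 - T 1 : ℤ[T;T⁻¹]) • e z x := by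
        rw [e_coe, smul_smul, Finsupp.smul_single', Finsupp.smul_single', mul_one, mul_comm]
      rw [hx]
      refine smul_mem_of_T_smul_mem (fun v hv => ?_) (fun v hv => ?_) p
        (one_sub_T_one_smul_e_mem_stabilizer he hcl x)
      · exact T_smul_mem_stabilizer (T_one_smul_mem_iff he hcl) hv
      · exact T_smul_mem_stabilizer (T_neg_one_smul_mem_iff he hcl) hv
  rw [add_comm]
  exact (AddAction.mem_stabilizer_set.1 hm _).2 (he i)

end Generation

theorem eqOn_S_of_map_op {R : Type*} [Rack R] {f g : ({x : X // x ≠ z} →₀ ℤ[T;T⁻¹]) → R}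
    (hf : ∀ a ∈ S z, ∀ b ∈ S z, f (op z a b) = f a ◃ f b)
    (hg : ∀ a ∈ S z, ∀ b ∈ S z, g (op z a b) = g a ◃ g b)
    (he : ∀ i, f (e z i) = g (e z i)) : Set.EqOn f g (S z) := by
  refine fun a ha => (S_subset_of_closed (s := {a | a ∈ S z ∧ f a = g a})
    (fun i => ⟨e_mem_S z i, he i⟩) ?_ ha).2
  rintro a b ⟨ha, hfa⟩ ⟨hb, hfb⟩
  have hab := ld_mem_S z ha hb
  refine ⟨⟨op_mem_S z ha hb, by rw [hf a ha b hb, hg a ha b hb, hfa, hfb]⟩, hab, ?_⟩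
  rw [← Rack.left_cancel (f a), ← hf a ha _ hab, op_ld, hfa, ← hg a ha _ hab, op_ld, hfb]

section Lift

open Rack

variable {Q : Type*} [Quandle Q] (ψ : X → Q) [IsMulCommutative (dis (ψ z))]

theorem displacement_e (i : X) :
    displacement z ψ (e z i) = act' (ψ i) * (act' (ψ z))⁻¹ := by
  by_cases hi : i = z
  · subst hi
    simp [displacement, e_self]
  · simp [displacement, e, hi]

noncomputable def lift : ({x : X // x ≠ z} →₀ ℤ[T;T⁻¹]) → Q :=
  Function.extend
    (fun p : X × ({x : X // x ≠ z} →₀ ℤ[T;T⁻¹]) => e z p.1 + (1 - T 1 : ℤ[T;T⁻¹]) • p.2)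
    (fun p => displacement z ψ p.2 (ψ p.1)) fun _ => ψ z

theorem lift_e_add_smul (i : X) (m : {x : X // x ≠ z} →₀ ℤ[T;T⁻¹]) :
    lift z ψ (e z i + (1 - T 1 : ℤ[T;T⁻¹]) • m) = displacement z ψ m (ψ i) :=
  (injective_e_add_smul z).extend_apply _ _ (i, m)

theorem lift_e (i : X) : lift z ψ (e z i) = ψ i := by
  simpa [displacement] using lift_e_add_smul z ψ i 0

theorem lift_op {a b : {x : X // x ≠ z} →₀ ℤ[T;T⁻¹]} (ha : a ∈ S z) (hb : b ∈ S z) :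
    lift z ψ (op z a b) = lift z ψ a ◃ lift z ψ b := by
  obtain ⟨i, m, rfl⟩ := ha
  obtain ⟨j, n, rfl⟩ := hb
  rw [op_e_add_smul, lift_e_add_smul, lift_e_add_smul, lift_e_add_smul,
    Quandle.act_apply_of_mem_dis (displacement_mem z ψ m)]
  simp only [displacement_add, displacement_sub, displacement_e, displacement_T_one_smul]

end Lift

end affMQ

/-- The free medial quandle over `X` is (isomorphic to) the subquandle `S` of the affine
quandle `Aff(⊕_{x ∈ X∖{z}} ℤ[t,t⁻¹], t)` of elements congruent to some `e_i` modulo `(1-t)`: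
`S` is a subquandle containing all `e_i`, it is generated by `{e_i : i ∈ X}`, and it has the
universal property of the free medial quandle over `{e_i : i ∈ X}`. -/
theorem free_medial_quandle_as_affine_subquandle {X : Type*} [DecidableEq X] (z : X) :
    (∀ i : X, affMQ.e z i ∈ affMQ.S z) ∧
    (∀ a b, a ∈ affMQ.S z → b ∈ affMQ.S z →
      affMQ.op z a b ∈ affMQ.S z ∧ affMQ.ld z a b ∈ affMQ.S z) ∧
    (∀ T : Set ({x : X // x ≠ z} →₀ LaurentPolynomial ℤ),
      (∀ i : X, affMQ.e z i ∈ T) →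
      (∀ a b, a ∈ T → b ∈ T → affMQ.op z a b ∈ T ∧ affMQ.ld z a b ∈ T) →
      ∀ a ∈ affMQ.S z, a ∈ T) ∧
    (∀ (Q : Type) (opQ : Q → Q → Q),
      (∀ x, opQ x x = x) →
      (∀ x y w, opQ x (opQ y w) = opQ (opQ x y) (opQ x w)) →
      (∀ x y, ∃! u, opQ x u = y) →
      (∀ x y u v, opQ (opQ x y) (opQ u v) = opQ (opQ x u) (opQ y v)) →
      ∀ ψ : X → Q,
        ∃ Ψ : ({x : X // x ≠ z} →₀ LaurentPolynomial ℤ) → Q,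
          (∀ a ∈ affMQ.S z, ∀ b ∈ affMQ.S z, Ψ (affMQ.op z a b) = opQ (Ψ a) (Ψ b)) ∧
          (∀ i : X, Ψ (affMQ.e z i) = ψ i) ∧
          ∀ Ψ' : ({x : X // x ≠ z} →₀ LaurentPolynomial ℤ) → Q,
            (∀ a ∈ affMQ.S z, ∀ b ∈ affMQ.S z, Ψ' (affMQ.op z a b) = opQ (Ψ' a) (Ψ' b)) →
            (∀ i : X, Ψ' (affMQ.e z i) = ψ i) →
            ∀ a ∈ affMQ.S z, Ψ a = Ψ' a) := by
  refine ⟨affMQ.e_mem_S z, fun a b ha hb => ⟨affMQ.op_mem_S z ha hb, affMQ.ld_mem_S z ha hb⟩,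
    fun s he hcl => affMQ.S_subset_of_closed he hcl, ?_⟩
  intro Q opQ idem ldist ldiv medial ψ
  let _ : Quandle Q := Quandle.ofExistsUnique opQ idem ldist ldiv
  have _ := Rack.IsAbelian.isMulCommutative_dis medial (ψ z)
  have hop : ∀ a ∈ affMQ.S z, ∀ b ∈ affMQ.S z,
      affMQ.lift z ψ (affMQ.op z a b) = opQ (affMQ.lift z ψ a) (affMQ.lift z ψ b) :=
    fun _ ha _ hb => affMQ.lift_op z ψ ha hb
  exact ⟨affMQ.lift z ψ, hop, affMQ.lift_e z ψ, fun Ψ' hΨ' hΨ'e =>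
    affMQ.eqOn_S_of_map_op z hop hΨ' fun i => (affMQ.lift_e z ψ i).trans (hΨ'e i).symm⟩
end

section
/- A medial quandle Q is n-symmetric (i.e. L_x^n = 1 for each x ∈ Q) if and only if α^{f(L)} = 1 for every α ∈ Dis(Q), where f = 1 + t + ⋯ + t^{n-1} and α^{L} denotes conjugation of α by a left translation (well-defined by mediality). -/
/-- A medial quandle `Q` is `n`-symmetric (`L_x ^ n = 1` for each `x`) if and only if
`α ^ (1 + t + ⋯ + t^{n-1}) = 1` for every `α` in the displacement group, where `α ^ t`
is conjugation of `α` by a left translation (independent of the translation by mediality). -/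
theorem n_symmetric_iff_polynomial_identity {Q : Type*} (op : Q → Q → Q)
    (L : Q → Equiv.Perm Q) (hL : ∀ x y, L x y = op x y)
    (hidem : ∀ x, op x x = x)
    (hldist : ∀ x y w, op x (op y w) = op (op x y) (op x w))
    (hmed : ∀ x y u v, op (op x y) (op u v) = op (op x u) (op y v))
    (w : Q) (n : ℕ) (hn : 1 ≤ n) :
    (∀ x : Q, (L x) ^ n = 1) ↔
    ∀ g ∈ Subgroup.closure {h : Equiv.Perm Q | ∃ u v : Q, h = L u * (L v)⁻¹},
      ((List.range n).map
        (fun r => (fun α : Equiv.Perm Q => L w * α * (L w)⁻¹)^[r] g)).prod = 1 := by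
  have ldist : ∀ x y, L x * L y = L (op x y) * L x := by
    intro x y; ext z; simp [Equiv.Perm.mul_apply, hL]; exact hldist x y z
  have med : ∀ x y u, L (op x y) * L u = L (op x u) * L y := by
    intro x y u; ext z; simp [Equiv.Perm.mul_apply, hL]; exact hmed x y u z
  have conjL : ∀ x y, L x * L y * (L x)⁻¹ = L (op x y) := by
    intro x y; rw [ldist]; group
  have K : ∀ x y u, L y * (L x)⁻¹ * L u = L u * (L x)⁻¹ * L y := by
    intro x y u
    have h := med x y u
    rw [← conjL x y, ← conjL x u] at h
    have h2 := congrArg (fun z => (L x)⁻¹ * z) h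
    simpa [mul_assoc] using h2
  have Kinv : ∀ a b d, (L b)⁻¹ * L a * (L d)⁻¹ = (L d)⁻¹ * L a * (L b)⁻¹ := by
    intro a b d
    have h3 := congrArg Inv.inv (K a b d)
    simpa [mul_inv_rev, mul_assoc] using h3.symm
  have Kcomm : ∀ a b c d, (L a * (L b)⁻¹) * (L c * (L d)⁻¹)
      = (L c * (L d)⁻¹) * (L a * (L b)⁻¹) := by
    intro a b c d
    calc (L a * (L b)⁻¹) * (L c * (L d)⁻¹)
        = (L a * (L b)⁻¹ * L c) * (L d)⁻¹ := by group
      _ = (L c * (L b)⁻¹ * L a) * (L d)⁻¹ := by rw [K b a c]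
      _ = L c * ((L b)⁻¹ * L a * (L d)⁻¹) := by group
      _ = L c * ((L d)⁻¹ * L a * (L b)⁻¹) := by rw [Kinv]
      _ = (L c * (L d)⁻¹) * (L a * (L b)⁻¹) := by group
  set S : Set (Equiv.Perm Q) := {h : Equiv.Perm Q | ∃ u v : Q, h = L u * (L v)⁻¹} with hS
  set D : Subgroup (Equiv.Perm Q) := Subgroup.closure S with hD
  -- every element of D commutes with every element of D
  have hcommS : ∀ g ∈ D, ∀ s ∈ S, g * s = s * g := by
    intro g hg
    induction hg using Subgroup.closure_induction with
    | mem x hx =>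
      intro s hs
      obtain ⟨a, b, rfl⟩ := hx
      obtain ⟨c, d, rfl⟩ := hs
      exact Kcomm a b c d
    | one => intro s _; simp
    | mul x y hx hy ihx ihy =>
      intro s hs
      calc x * y * s = x * (s * y) := by rw [mul_assoc, ihy s hs]
        _ = s * (x * y) := by rw [← mul_assoc, ihx s hs, mul_assoc]
    | inv x hx ihx =>
      intro s hs
      have := ihx s hs
      calc x⁻¹ * s = x⁻¹ * s * x * x⁻¹ := by group
        _ = x⁻¹ * (x * s) * x⁻¹ := by rw [mul_assoc x⁻¹ s x, ← this]
        _ = s * x⁻¹ := by group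
  have hcomm : ∀ g ∈ D, ∀ h ∈ D, g * h = h * g := by
    intro g hg h hh
    induction hh using Subgroup.closure_induction with
    | mem x hx => exact hcommS g hg x hx
    | one => simp
    | mul x y hx hy ihx ihy =>
      calc g * (x * y) = x * (g * y) := by rw [← mul_assoc, ihx, mul_assoc]
        _ = x * y * g := by rw [ihy, mul_assoc]
    | inv x hx ihx =>
      calc g * x⁻¹ = x⁻¹ * (x * g) * x⁻¹ := by group
        _ = x⁻¹ * (g * x) * x⁻¹ := by rw [ihx]
        _ = x⁻¹ * g := by group
  -- conjugation by L w preserves D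
  have hφD : ∀ g ∈ D, L w * g * (L w)⁻¹ ∈ D := by
    intro g hg
    induction hg using Subgroup.closure_induction with
    | mem x hx =>
      obtain ⟨u, v, rfl⟩ := hx
      have : L w * (L u * (L v)⁻¹) * (L w)⁻¹
          = (L w * L u * (L w)⁻¹) * (L w * L v * (L w)⁻¹)⁻¹ := by group
      rw [this, conjL w u, conjL w v]
      exact Subgroup.subset_closure ⟨op w u, op w v, rfl⟩
    | one => simpa using D.one_mem
    | mul x y hx hy ihx ihy =>
      have : L w * (x * y) * (L w)⁻¹ = (L w * x * (L w)⁻¹) * (L w * y * (L w)⁻¹) := by group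
      rw [this]; exact D.mul_mem ihx ihy
    | inv x hx ihx =>
      have : L w * x⁻¹ * (L w)⁻¹ = (L w * x * (L w)⁻¹)⁻¹ := by group
      rw [this]; exact D.inv_mem ihx
  set φ : Equiv.Perm Q → Equiv.Perm Q := fun α : Equiv.Perm Q => L w * α * (L w)⁻¹ with hφ
  have hiter_mem : ∀ (r : ℕ), ∀ g ∈ D, φ^[r] g ∈ D := by
    intro r
    induction r with
    | zero => intro g hg; simpa using hg
    | succ m ih =>
      intro g hg
      rw [Function.iterate_succ_apply']
      exact hφD _ (ih g hg)
  have hiter_eq : ∀ (r : ℕ) (g : Equiv.Perm Q),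
      φ^[r] g = (L w) ^ r * g * ((L w) ^ r)⁻¹ := by
    intro r g
    induction r with
    | zero => simp
    | succ m ih =>
      rw [Function.iterate_succ_apply', ih, hφ]
      simp only [pow_succ]
      group
  -- the partial products
  set P : ℕ → Equiv.Perm Q → Equiv.Perm Q :=
    fun m g => ((List.range m).map (fun r => φ^[r] g)).prod with hP
  have Psucc : ∀ (m : ℕ) (g : Equiv.Perm Q), P (m + 1) g = P m g * φ^[m] g := by
    intro m g
    rw [hP]
    simp [List.range_succ]
  have Pmem : ∀ (m : ℕ), ∀ g ∈ D, P m g ∈ D := by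
    intro m
    induction m with
    | zero => intro g hg; simpa [hP] using D.one_mem
    | succ k ih =>
      intro g hg
      rw [Psucc]
      exact D.mul_mem (ih g hg) (hiter_mem k g hg)
  have telescope : ∀ (m : ℕ) (g : Equiv.Perm Q),
      P m g = (g * L w) ^ m * ((L w) ^ m)⁻¹ := by
    intro m g
    induction m with
    | zero => simp [hP]
    | succ k ih =>
      rw [Psucc, ih, hiter_eq]
      rw [pow_succ (g * L w), pow_succ (L w)]
      group
  have Pmul : ∀ (m : ℕ), ∀ g ∈ D, ∀ h ∈ D, P m (g * h) = P m g * P m h := by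
    intro m
    induction m with
    | zero => intro g _ h _; simp [hP]
    | succ k ih =>
      intro g hg h hh
      have hiter_mul : φ^[k] (g * h) = φ^[k] g * φ^[k] h := by
        rw [hiter_eq, hiter_eq, hiter_eq]; group
      rw [Psucc, Psucc, Psucc, ih g hg h hh, hiter_mul]
      have hc : P k h * φ^[k] g = φ^[k] g * P k h :=
        hcomm _ (Pmem k h hh) _ (hiter_mem k g hg)
      calc P k g * P k h * (φ^[k] g * φ^[k] h)
          = P k g * (P k h * φ^[k] g) * φ^[k] h := by group
        _ = P k g * (φ^[k] g * P k h) * φ^[k] h := by rw [hc]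
        _ = P k g * φ^[k] g * (P k h * φ^[k] h) := by group
  have Pinv : ∀ (m : ℕ), ∀ g ∈ D, P m g⁻¹ = (P m g)⁻¹ := by
    intro m
    induction m with
    | zero => simp [hP]
    | succ k ih =>
      intro g hg
      have hiter_inv : φ^[k] g⁻¹ = (φ^[k] g)⁻¹ := by
        rw [hiter_eq, hiter_eq]; group
      rw [Psucc, Psucc, ih g hg, hiter_inv]
      have hc : P k g * φ^[k] g = φ^[k] g * P k g :=
        hcomm _ (Pmem k g hg) _ (hiter_mem k g hg)
      rw [← mul_inv_rev, hc, mul_inv_rev]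
  constructor
  · intro hsym g hg
    show P n g = 1
    have base : ∀ u : Q, P n (L u * (L w)⁻¹) = 1 := by
      intro u
      rw [telescope]
      have : L u * (L w)⁻¹ * L w = L u := by group
      rw [this, hsym u, hsym w]
      simp
    induction hg using Subgroup.closure_induction with
    | mem x hx =>
      obtain ⟨u, v, rfl⟩ := hx
      have hdecomp : L u * (L v)⁻¹ = (L u * (L w)⁻¹) * (L v * (L w)⁻¹)⁻¹ := by group
      have hu : (L u * (L w)⁻¹) ∈ D := Subgroup.subset_closure ⟨u, w, rfl⟩
      have hv : (L v * (L w)⁻¹) ∈ D := Subgroup.subset_closure ⟨v, w, rfl⟩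
      rw [hdecomp, Pmul n _ hu _ (D.inv_mem hv), Pinv n _ hv, base u, base v]
      simp
    | one =>
      have : P n (1 : Equiv.Perm Q) = (1 * L w) ^ n * ((L w) ^ n)⁻¹ := telescope n 1
      rw [this]; simp
    | mul x y hx hy ihx ihy =>
      rw [Pmul n x hx y hy, ihx, ihy]; simp
    | inv x hx ihx =>
      rw [Pinv n x hx, ihx]; simp
  · intro hPall
    have key : ∀ x : Q, (L x) ^ n = (L w) ^ n := by
      intro x
      have hg : (L x * (L w)⁻¹) ∈ D := Subgroup.subset_closure ⟨x, w, rfl⟩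
      have h1 : P n (L x * (L w)⁻¹) = 1 := hPall _ hg
      rw [telescope] at h1
      have h2 : L x * (L w)⁻¹ * L w = L x := by group
      rw [h2] at h1
      exact mul_inv_eq_one.mp h1
    have hfixpt : ∀ (z : Q) (k : ℕ), ((L z) ^ k) z = z := by
      intro z k
      induction k with
      | zero => simp
      | succ m ih =>
        rw [pow_succ']
        simp only [Equiv.Perm.mul_apply]
        rw [ih]
        · rw [hL]; exact hidem z
    have hw1 : (L w) ^ n = 1 := by
      ext z
      rw [← key z]
      simpa using hfixpt z n
    intro x
    rw [key x, hw1]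
end

section
/- A medial quandle Q is m-reductive (i.e. R_x^m(y) = x for all x,y ∈ Q) if and only if α^{(1−t)^{m-1}} = 1 for every α ∈ Dis(Q), where the ℤ[t,t^{-1}]-module structure on Dis(Q) is given by α^t = L_w α L_w^{-1}. -/
/-!
Write `R_y` for the right translation `x ↦ x * y` and `oneSubConj c α = α * (c α c⁻¹)⁻¹`, the
map `α ↦ α ^ (1 - t)` when `c = L w`. Left distributivity gives `L (x * y) = L x L y (L x)⁻¹`,
which turns one step of `R_y` into one application of `α ↦ α ^ (1 - t)` with conjugator `L y`:
`R_y ^ (n + 1) (x) = (L x (L y)⁻¹) ^ ((1 - t) ^ n) (y)`. Mediality makes `Dis(Q)` abelian, so the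
conjugator may be replaced by any `L w` and `α ↦ α ^ (1 - t)` is an endomorphism of `Dis(Q)`.
Hence `m`-reductivity says that `α ^ ((1 - t) ^ (m - 1))` fixes `z` for every generator
`α = L u (L z)⁻¹`; since `L u (L v)⁻¹ = (L u (L z)⁻¹) (L v (L z)⁻¹)⁻¹`, this holds for every
generator and every point, i.e. `(1 - t) ^ (m - 1)` kills `Dis(Q)`.
-/

open Function Subgroup

section OneSubConj

variable {G : Type*} [Group G] {H : Subgroup G} {c d : G}

def oneSubConj (c a : G) : G := a * (c * a * c⁻¹)⁻¹

lemma oneSubConj_one (c : G) : oneSubConj c 1 = 1 := by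
  simp [oneSubConj]

lemma mapsTo_oneSubConj (hc : Set.MapsTo (fun a => c * a * c⁻¹) H H) :
    Set.MapsTo (oneSubConj c) H H :=
  fun _ ha => H.mul_mem ha (H.inv_mem (hc ha))

lemma oneSubConj_mul (hH : H ≤ centralizer H) (hc : Set.MapsTo (fun a => c * a * c⁻¹) H H)
    {a b : G} (ha : a ∈ H) (hb : b ∈ H) :
    oneSubConj c (a * b) = oneSubConj c a * oneSubConj c b := by
  have hcomm : (c * a * c⁻¹)⁻¹ * oneSubConj c b = oneSubConj c b * (c * a * c⁻¹)⁻¹ :=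
    hH (mapsTo_oneSubConj hc hb) _ (H.inv_mem (hc ha))
  calc oneSubConj c (a * b) = a * (oneSubConj c b * (c * a * c⁻¹)⁻¹) := by
        simp only [oneSubConj]; group
    _ = a * ((c * a * c⁻¹)⁻¹ * oneSubConj c b) := by rw [hcomm]
    _ = oneSubConj c a * oneSubConj c b := by simp only [oneSubConj]; group

lemma iterate_oneSubConj_mul (hH : H ≤ centralizer H)
    (hc : Set.MapsTo (fun a => c * a * c⁻¹) H H) (k : ℕ) {a b : G} (ha : a ∈ H) (hb : b ∈ H) :
    (oneSubConj c)^[k] (a * b) = (oneSubConj c)^[k] a * (oneSubConj c)^[k] b := by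
  induction k generalizing a b with
  | zero => rfl
  | succ k ih =>
    simp only [iterate_succ_apply, oneSubConj_mul hH hc ha hb]
    exact ih (mapsTo_oneSubConj hc ha) (mapsTo_oneSubConj hc hb)

lemma iterate_oneSubConj_inv (hH : H ≤ centralizer H)
    (hc : Set.MapsTo (fun a => c * a * c⁻¹) H H) (k : ℕ) {a : G} (ha : a ∈ H) :
    (oneSubConj c)^[k] a⁻¹ = ((oneSubConj c)^[k] a)⁻¹ :=
  eq_inv_of_mul_eq_one_left <| by
    rw [← iterate_oneSubConj_mul hH hc k (H.inv_mem ha) ha, inv_mul_cancel,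
      iterate_fixed (oneSubConj_one c)]

lemma iterate_oneSubConj_eq_one_of_forall_mem {S : Set G}
    (hH : closure S ≤ centralizer (closure S))
    (hc : Set.MapsTo (fun a => c * a * c⁻¹) (closure S) (closure S)) (k : ℕ)
    (hS : ∀ s ∈ S, (oneSubConj c)^[k] s = 1) {g : G} (hg : g ∈ closure S) :
    (oneSubConj c)^[k] g = 1 := by
  induction hg using closure_induction with
  | mem s hs => exact hS s hs
  | one => exact iterate_fixed (oneSubConj_one c) k
  | mul a b ha hb iha ihb => rw [iterate_oneSubConj_mul hH hc k ha hb, iha, ihb, one_mul]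
  | inv a ha iha => rw [iterate_oneSubConj_inv hH hc k ha, iha, inv_one]

lemma conj_eq_conj_of_inv_mul_mem (hH : H ≤ centralizer H) (hcd : c⁻¹ * d ∈ H) {a : G}
    (ha : a ∈ H) : c * a * c⁻¹ = d * a * d⁻¹ := by
  have hcomm : a * (c⁻¹ * d) = c⁻¹ * d * a := hH hcd a ha
  calc c * a * c⁻¹ = c * (a * (c⁻¹ * d)) * d⁻¹ := by group
    _ = c * (c⁻¹ * d * a) * d⁻¹ := by rw [hcomm]
    _ = d * a * d⁻¹ := by group

lemma iterate_oneSubConj_congr (hH : H ≤ centralizer H)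
    (hc : Set.MapsTo (fun a => c * a * c⁻¹) H H) (hcd : c⁻¹ * d ∈ H) (k : ℕ) {a : G}
    (ha : a ∈ H) : (oneSubConj c)^[k] a = (oneSubConj d)^[k] a := by
  induction k generalizing a with
  | zero => rfl
  | succ k ih =>
    have hstep : oneSubConj c a = oneSubConj d a := by
      rw [oneSubConj, oneSubConj, conj_eq_conj_of_inv_mul_mem hH hcd ha]
    rw [iterate_succ_apply, iterate_succ_apply, ← hstep, ih (mapsTo_oneSubConj hc ha)]

end OneSubConj

section MedialQuandle

variable {Q : Type*} {op : Q → Q → Q} {L : Q → Equiv.Perm Q}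

def displacementGroup (L : Q → Equiv.Perm Q) : Subgroup (Equiv.Perm Q) :=
  closure {h | ∃ u v : Q, h = L u * (L v)⁻¹}

lemma L_op (hL : ∀ x y, L x y = op x y)
    (hldist : ∀ x y w, op x (op y w) = op (op x y) (op x w)) (x y : Q) :
    L (op x y) = L x * L y * (L x)⁻¹ := by
  ext z
  obtain ⟨z, rfl⟩ := (L x).surjective z
  simp only [Equiv.Perm.mul_apply, Equiv.Perm.inv_def, Equiv.symm_apply_apply]
  simp only [hL]
  exact (hldist x y z).symm

lemma L_mul_inv_mul_comm (hL : ∀ x y, L x y = op x y)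
    (hldist : ∀ x y w, op x (op y w) = op (op x y) (op x w))
    (hmed : ∀ x y u v, op (op x y) (op u v) = op (op x u) (op y v)) (x y u : Q) :
    L y * (L x)⁻¹ * L u = L u * (L x)⁻¹ * L y := by
  have hmedL : L (op x y) * L u = L (op x u) * L y := by
    ext v
    simpa [hL] using hmed x y u v
  rw [L_op hL hldist, L_op hL hldist] at hmedL
  simpa [mul_assoc] using hmedL

lemma displacementGroup_le_centralizer (hL : ∀ x y, L x y = op x y)
    (hldist : ∀ x y w, op x (op y w) = op (op x y) (op x w))
    (hmed : ∀ x y u v, op (op x y) (op u v) = op (op x u) (op y v)) :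
    displacementGroup L ≤ centralizer (displacementGroup L) := by
  rw [displacementGroup, centralizer_closure, closure_le]
  rintro _ ⟨c, d, rfl⟩ _ ⟨a, b, rfl⟩
  have h₁ := L_mul_inv_mul_comm hL hldist hmed b a c
  have h₂ := congrArg (·⁻¹) (L_mul_inv_mul_comm hL hldist hmed a d b)
  simp only [mul_inv_rev, inv_inv, ← mul_assoc] at h₂
  calc L a * (L b)⁻¹ * (L c * (L d)⁻¹) = L a * (L b)⁻¹ * L c * (L d)⁻¹ := by group
    _ = L c * (L b)⁻¹ * L a * (L d)⁻¹ := by rw [h₁]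
    _ = L c * ((L b)⁻¹ * L a * (L d)⁻¹) := by group
    _ = L c * ((L d)⁻¹ * L a * (L b)⁻¹) := by rw [h₂]
    _ = L c * (L d)⁻¹ * (L a * (L b)⁻¹) := by group

lemma mapsTo_conj_displacementGroup (hL : ∀ x y, L x y = op x y)
    (hldist : ∀ x y w, op x (op y w) = op (op x y) (op x w)) (x : Q) :
    Set.MapsTo (fun a => L x * a * (L x)⁻¹) (displacementGroup L) (displacementGroup L) := by
  intro a ha
  have hmap := mem_map_of_mem (MulAut.conj (L x)).toMonoidHom ha
  rw [displacementGroup, MonoidHom.map_closure] at hmap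
  refine closure_mono ?_ hmap
  rintro _ ⟨_, ⟨u, v, rfl⟩, rfl⟩
  refine ⟨op x u, op x v, ?_⟩
  show L x * (L u * (L v)⁻¹) * (L x)⁻¹ = _
  rw [L_op hL hldist, L_op hL hldist]
  group

lemma inv_mul_mem_displacementGroup (hL : ∀ x y, L x y = op x y)
    (hldist : ∀ x y w, op x (op y w) = op (op x y) (op x w)) (y z : Q) :
    (L y)⁻¹ * L z ∈ displacementGroup L := by
  refine subset_closure ⟨(L y)⁻¹ z, y, ?_⟩
  have hz := L_op hL hldist y ((L y)⁻¹ z)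
  rw [← hL, ← Equiv.Perm.mul_apply, mul_inv_cancel, Equiv.Perm.one_apply] at hz
  rw [hz]; group

lemma iterate_op_right_succ (hL : ∀ x y, L x y = op x y) (hidem : ∀ x, op x x = x)
    (hldist : ∀ x y w, op x (op y w) = op (op x y) (op x w)) (n : ℕ) (x y : Q) :
    (fun a => op a y)^[n + 1] x = (oneSubConj (L y))^[n] (L x * (L y)⁻¹) y := by
  induction n generalizing x with
  | zero =>
    have hy : (L y)⁻¹ y = y := Equiv.Perm.inv_eq_iff_eq.mpr (by rw [hL, hidem])
    show op x y = (L x * (L y)⁻¹) y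
    rw [Equiv.Perm.mul_apply, hy, hL]
  | succ n ih =>
    have hstep : L (op x y) * (L y)⁻¹ = oneSubConj (L y) (L x * (L y)⁻¹) := by
      rw [L_op hL hldist, oneSubConj]; group
    rw [iterate_succ_apply, ih, hstep, ← iterate_succ_apply]

lemma iterate_oneSubConj_L_mul_inv_eq_one {c : Equiv.Perm Q}
    (hH : displacementGroup L ≤ centralizer (displacementGroup L))
    (hc : Set.MapsTo (fun a => c * a * c⁻¹) (displacementGroup L) (displacementGroup L)) (k : ℕ)
    (hfix : ∀ z u, (oneSubConj c)^[k] (L u * (L z)⁻¹) z = z) (u v : Q) :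
    (oneSubConj c)^[k] (L u * (L v)⁻¹) = 1 := by
  ext z
  have hgen : ∀ u, L u * (L z)⁻¹ ∈ displacementGroup L := fun u => subset_closure ⟨u, z, rfl⟩
  have hv : ((oneSubConj c)^[k] (L v * (L z)⁻¹))⁻¹ z = z :=
    Equiv.Perm.inv_eq_iff_eq.mpr (hfix z v).symm
  rw [show L u * (L v)⁻¹ = L u * (L z)⁻¹ * (L v * (L z)⁻¹)⁻¹ by group,
    iterate_oneSubConj_mul hH hc k (hgen u) (inv_mem (hgen v)),
    iterate_oneSubConj_inv hH hc k (hgen v), Equiv.Perm.mul_apply, hv, hfix z u]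
  rfl

end MedialQuandle

/-- A medial quandle `Q` is `m`-reductive (`R_x ^ m (y) = x` for all `x, y`) if and only if
`α ^ ((1-t)^{m-1}) = 1` for every `α` in the displacement group, where `α ^ t` is conjugation
by a left translation and `α ^ (1-t) = α * (α^t)⁻¹`. -/
theorem m_reductive_iff_polynomial_identity {Q : Type*} (op : Q → Q → Q)
    (L : Q → Equiv.Perm Q) (hL : ∀ x y, L x y = op x y)
    (hidem : ∀ x, op x x = x)
    (hldist : ∀ x y w, op x (op y w) = op (op x y) (op x w))
    (hmed : ∀ x y u v, op (op x y) (op u v) = op (op x u) (op y v))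
    (w : Q) (m : ℕ) (hm : 1 ≤ m) :
    (∀ x y : Q, (fun a => op a x)^[m] y = x) ↔
    ∀ g ∈ Subgroup.closure {h : Equiv.Perm Q | ∃ u v : Q, h = L u * (L v)⁻¹},
      (fun α : Equiv.Perm Q => α * (L w * α * (L w)⁻¹)⁻¹)^[m - 1] g = 1 := by
  obtain ⟨k, rfl⟩ : ∃ k, m = k + 1 := ⟨m - 1, by omega⟩
  have hH := displacementGroup_le_centralizer hL hldist hmed
  have hc := mapsTo_conj_displacementGroup hL hldist w
  have hR : ∀ x y, (fun a => op a x)^[k + 1] y = (oneSubConj (L w))^[k] (L y * (L x)⁻¹) x :=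
    fun x y => by
      rw [iterate_op_right_succ hL hidem hldist, iterate_oneSubConj_congr hH
        (mapsTo_conj_displacementGroup hL hldist x) (inv_mul_mem_displacementGroup hL hldist x w)
        k (subset_closure ⟨y, x, rfl⟩)]
  change _ ↔ ∀ g ∈ displacementGroup L, (oneSubConj (L w))^[k] g = 1
  simp only [hR]
  refine ⟨fun hfix g hg => iterate_oneSubConj_eq_one_of_forall_mem hH hc k ?_ hg, ?_⟩
  · rintro _ ⟨u, v, rfl⟩
    exact iterate_oneSubConj_L_mul_inv_eq_one hH hc k hfix u v
  · intro hker x y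
    rw [hker _ (subset_closure ⟨y, x, rfl⟩)]
    rfl
end

section
/- Let n ∈ ℕ, n ≥ 1, and let X be a set with distinguished element z. Let M = ⊕_{x ∈ X∖{z}} ℤ[t]/(1+t+⋯+t^{n-1}), with basis images e_i (e_z = 0). Then F = M × X with (a,i)*(b,j) = ((1−t)·a + t·b + e_i − e_j, j) is a medial quandle satisfying the n-symmetric law x*(x*⋯*(x*y)) = y (n occurrences of x), and it is the free n-symmetric medial quandle on {(0,i) : i ∈ X}. -/
open Polynomial

/-- The ring `ℤ[t]/(1 + t + ⋯ + t^{n-1})`. -/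
abbrev symMQ.R (n : ℕ) : Type :=
  Polynomial ℤ ⧸ Ideal.span {∑ i ∈ Finset.range n, (X : Polynomial ℤ) ^ i}

/-- The image `t` of the variable in `ℤ[t]/(1 + t + ⋯ + t^{n-1})`. -/
noncomputable def symMQ.t (n : ℕ) : symMQ.R n :=
  Ideal.Quotient.mk _ (X : Polynomial ℤ)

/-- The basis vectors `e_i` of `⊕_{x ∈ X∖{z}} ℤ[t]/(1+t+⋯+t^{n-1})`, with `e_z = 0`. -/
noncomputable def symMQ.e {X : Type*} [DecidableEq X] (n : ℕ) (z : X) (i : X) :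
    {x : X // x ≠ z} →₀ symMQ.R n :=
  if h : i = z then 0 else Finsupp.single ⟨i, h⟩ 1

/-- The operation `(a,i) * (b,j) = ((1-t)·a + t·b + e_i - e_j, j)` on `M × X`, where
`M = ⊕_{x ∈ X∖{z}} ℤ[t]/(1+t+⋯+t^{n-1})`. -/
noncomputable def symMQ.op {X : Type*} [DecidableEq X] (n : ℕ) (z : X)
    (p q : ({x : X // x ≠ z} →₀ symMQ.R n) × X) :
    ({x : X // x ≠ z} →₀ symMQ.R n) × X :=
  ((1 - symMQ.t n) • p.1 + symMQ.t n • q.1 + symMQ.e n z p.2 - symMQ.e n z q.2, q.2)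

/-! Write `L_p` for left multiplication by `p`. Every element of `F` is generated by the `(0, i)`:
the translations of `M` that preserve the set of generated elements form an additive subgroup,
which contains `e_j - e_{j'}` because `L_{(0,j)}` is `L_{(0,j')}` followed by translation by
`e_j - e_{j'}`, and which is stable under `t` because translation by `t m` is translation by `m`
conjugated by `L_{(0,z)}`; so it is all of `M`. This gives uniqueness.

For existence, let `Q` be an `n`-symmetric medial quandle and `θ = L_{ψ z}`. Mediality makes the
displacement group generated by the `L_q θ⁻¹` abelian, and conjugation by `θ` preserves it, so it
is a `ℤ[t]`-module with `t` acting as conjugation by `θ`. The `n`-symmetric law `L_q ^ n = 1`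
makes `1 + t + ⋯ + t^{n-1}` kill each `L_q θ⁻¹`, so `e_j ↦ L_{ψ j} θ⁻¹` extends to a linear map
`a ↦ D a` on `M`. Since `L_{D a x} = D ((1 - t) a) L_x`, the map `(a, i) ↦ D a (ψ i)` is the
required homomorphism.
-/

theorem Function.bijective_of_iterate_eq_id {α : Type*} {f : α → α} {n : ℕ} (hn : n ≠ 0)
    (h : f^[n] = id) : Function.Bijective f := by
  obtain ⟨k, rfl⟩ := Nat.exists_eq_succ_of_ne_zero hn
  refine Function.bijective_iff_has_inverse.mpr ⟨f^[k], ?_, ?_⟩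
  · exact congrFun (by rwa [Function.iterate_succ] at h)
  · exact congrFun (by rwa [Function.iterate_succ'] at h)

inductive GeneratedBy {α : Type*} (op : α → α → α) (s : Set α) : α → Prop
  | mem {a} : a ∈ s → GeneratedBy op s a
  | apply {a b} : GeneratedBy op s a → GeneratedBy op s b → GeneratedBy op s (op a b)

namespace GeneratedBy

variable {α β : Type*} {op : α → α → α} {s : Set α}

theorem iterate {a b : α} (ha : GeneratedBy op s a) (hb : GeneratedBy op s b) (k : ℕ) :
    GeneratedBy op s ((op a)^[k] b) := by
  induction k with
  | zero => exact hb
  | succ k ih => rw [Function.iterate_succ_apply']; exact ha.apply ih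

theorem apply_iff {n : ℕ} (hn : n ≠ 0) {a b : α} (hsym : ∀ b, (op a)^[n] b = b)
    (ha : GeneratedBy op s a) : GeneratedBy op s (op a b) ↔ GeneratedBy op s b := by
  refine ⟨fun hab => ?_, ha.apply⟩
  obtain ⟨k, rfl⟩ := Nat.exists_eq_succ_of_ne_zero hn
  simpa only [← Function.iterate_succ_apply, hsym] using ha.iterate hab k

theorem eq_of_eqOn {f g : α → β} {opβ : β → β → β} (hf : ∀ a b, f (op a b) = opβ (f a) (f b))
    (hg : ∀ a b, g (op a b) = opβ (g a) (g b)) (hfg : Set.EqOn f g s) {a : α}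
    (ha : GeneratedBy op s a) : f a = g a := by
  induction ha with
  | mem h => exact hfg h
  | apply _ _ iha ihb => rw [hf, hg, iha, ihb]

end GeneratedBy

namespace symMQ

theorem geom_sum_t (n : ℕ) : ∑ i ∈ Finset.range n, t n ^ i = 0 := by
  simp only [t, ← map_pow, ← map_sum, Ideal.Quotient.eq_zero_iff_mem]
  exact Ideal.mem_span_singleton_self _

theorem t_pow (n : ℕ) : t n ^ n = 1 := by
  linear_combination (-1 : R n) * mul_geom_sum (t n) n + (t n - 1) * geom_sum_t n

theorem smul_mem_of_t_smul_mem {n : ℕ} {M : Type*} [AddCommGroup M] [Module (R n) M]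
    (S : AddSubgroup M) (hS : ∀ m ∈ S, t n • m ∈ S) (r : R n) {m : M} (hm : m ∈ S) :
    r • m ∈ S := by
  have pow_smul_mem (k : ℕ) : t n ^ k • m ∈ S := by
    induction k with
    | zero => rwa [pow_zero, one_smul]
    | succ k ih => rw [pow_succ', mul_smul]; exact hS _ ih
  obtain ⟨p, rfl⟩ := Ideal.Quotient.mk_surjective r
  induction p using Polynomial.induction_on' with
  | add p q hp hq => rw [map_add, add_smul]; exact add_mem hp hq
  | monomial k a =>
    have hC : Ideal.Quotient.mk _ (C a) = (a : R n) :=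
      eq_intCast ((Ideal.Quotient.mk _).comp C : ℤ →+* R n) a
    rw [← C_mul_X_pow_eq_monomial, map_mul, hC, map_pow, mul_smul, Int.cast_smul_eq_zsmul]
    exact zsmul_mem (pow_smul_mem k) a

variable {X : Type*} [DecidableEq X] (n : ℕ) (z : X)

theorem op_self (p) : op n z p p = p :=
  Prod.ext (by simp only [op]; module) rfl

theorem op_left_distrib (p q r) : op n z p (op n z q r) = op n z (op n z p q) (op n z p r) :=
  Prod.ext (by simp only [op]; module) rfl

theorem op_medial (p q u v) :
    op n z (op n z p q) (op n z u v) = op n z (op n z p u) (op n z q v) :=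
  Prod.ext (by simp only [op]; module) rfl

theorem iterate_op (p q) (k : ℕ) : (op n z p)^[k] q =
    ((1 - t n ^ k) • p.1 + t n ^ k • q.1
      + (∑ i ∈ Finset.range k, t n ^ i) • (e n z p.2 - e n z q.2), q.2) := by
  induction k with
  | zero =>
    refine Prod.ext ?_ rfl
    simp only [Function.iterate_zero_apply, pow_zero, sub_self, Finset.range_zero,
      Finset.sum_empty]
    module
  | succ k ih =>
    rw [Function.iterate_succ_apply', ih, geom_sum_succ, pow_succ]
    exact Prod.ext (by simp only [op]; module) rfl

theorem iterate_op_n (p q) : (op n z p)^[n] q = q := by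
  rw [iterate_op, t_pow, geom_sum_t]
  exact Prod.ext (by module) rfl

theorem bijective_op {n : ℕ} (hn : 1 ≤ n) (z : X) (p) : Function.Bijective (op n z p) :=
  Function.bijective_of_iterate_eq_id (by omega) (funext (iterate_op_n n z p))

variable {n z}

abbrev Generated (n : ℕ) (z : X) : (({x : X // x ≠ z} →₀ R n) × X) → Prop :=
  GeneratedBy (op n z) (Set.range fun i => (0, i))

def generatedStabilizer (n : ℕ) (z : X) : AddSubgroup ({x : X // x ≠ z} →₀ R n) where
  carrier := {m | ∀ a i, Generated n z (a, i) ↔ Generated n z (a + m, i)}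
  zero_mem' a i := by rw [add_zero]
  add_mem' {m m'} hm hm' a i := by rw [hm a i, hm' (a + m) i, add_assoc]
  neg_mem' {m} hm a i := by rw [hm (a + -m) i, neg_add_cancel_right]

theorem generated_op_iff (hn : 1 ≤ n) {p q} (hp : Generated n z p) :
    Generated n z (op n z p q) ↔ Generated n z q :=
  GeneratedBy.apply_iff (by omega) (iterate_op_n n z p) hp

theorem mem_generatedStabilizer_of_op_eq (hn : 1 ≤ n) {p p'} (hp : Generated n z p)
    (hp' : Generated n z p') {m m'} (hm : m ∈ generatedStabilizer n z)
    (h : ∀ w, op n z p (w.1 + m, w.2) = ((op n z p' w).1 + m', (op n z p' w).2)) :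
    m' ∈ generatedStabilizer n z := by
  intro a i
  obtain ⟨w, hw⟩ := (bijective_op hn z p').2 (a, i)
  rw [← hw, generated_op_iff hn hp', hm, ← generated_op_iff hn hp, h, hw]

theorem e_sub_e_mem_generatedStabilizer (hn : 1 ≤ n) (j j' : X) :
    e n z j - e n z j' ∈ generatedStabilizer n z :=
  mem_generatedStabilizer_of_op_eq hn (.mem ⟨j, rfl⟩) (.mem ⟨j', rfl⟩) (zero_mem _)
    fun w => Prod.ext (by simp only [op]; module) rfl

theorem t_smul_mem_generatedStabilizer (hn : 1 ≤ n) {m} (hm : m ∈ generatedStabilizer n z) :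
    t n • m ∈ generatedStabilizer n z :=
  mem_generatedStabilizer_of_op_eq hn (.mem ⟨z, rfl⟩) (.mem ⟨z, rfl⟩) hm
    fun w => Prod.ext (by simp only [op, e, dite_true]; module) rfl

theorem mem_generatedStabilizer (hn : 1 ≤ n) (m) : m ∈ generatedStabilizer n z := by
  induction m using Finsupp.induction_linear with
  | zero => exact zero_mem _
  | add f g hf hg => exact add_mem hf hg
  | single j r =>
    have he : e n z j = Finsupp.single j 1 := dif_neg j.2
    have hez : e n z z = 0 := dif_pos rfl
    rw [← mul_one r, ← smul_eq_mul, ← Finsupp.smul_single, ← he]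
    refine smul_mem_of_t_smul_mem _ (fun _ => t_smul_mem_generatedStabilizer hn) r ?_
    simpa only [hez, sub_zero] using e_sub_e_mem_generatedStabilizer (z := z) hn j.1 z

theorem generated (hn : 1 ≤ n) (p) : Generated n z p := by
  simpa only [zero_add] using (mem_generatedStabilizer hn p.1 0 p.2).mp (.mem ⟨p.2, rfl⟩)

end symMQ

def opAutomorphisms {Q : Type*} (op : Q → Q → Q) : Subgroup (Equiv.Perm Q) where
  carrier := {g | ∀ x y, g (op x y) = op (g x) (g y)}
  mul_mem' {g g'} hg hg' x y := by simp only [Equiv.Perm.mul_apply]; rw [hg', hg]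
  one_mem' x y := rfl
  inv_mem' {g} hg x y :=
    g.injective (by rw [hg]; simp only [Equiv.Perm.coe_inv, Equiv.apply_symm_apply])

structure IsMedialRack {Q : Type*} (op : Q → Q → Q) : Prop where
  left_distrib : ∀ x y w, op x (op y w) = op (op x y) (op x w)
  medial : ∀ x y u v, op (op x y) (op u v) = op (op x u) (op y v)
  bijective : ∀ x, Function.Bijective (op x)

namespace IsMedialRack

open scoped IsMulCommutative

variable {Q : Type*} {op : Q → Q → Q} (h : IsMedialRack op)

noncomputable def L (x : Q) : Equiv.Perm Q := Equiv.ofBijective _ (h.bijective x)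

theorem L_apply (x y : Q) : h.L x y = op x y := rfl

theorem L_mem_opAutomorphisms (x : Q) : h.L x ∈ opAutomorphisms op := h.left_distrib x

theorem L_apply_of_mem_opAutomorphisms {g : Equiv.Perm Q} (hg : g ∈ opAutomorphisms op)
    (x : Q) : h.L (g x) = g * h.L x * g⁻¹ :=
  Equiv.ext fun y => by
    simp only [Equiv.Perm.mul_apply, L_apply, hg x, Equiv.Perm.coe_inv, Equiv.apply_symm_apply]

theorem L_mul_inv_mul_comm (a b c : Q) :
    h.L a * (h.L b)⁻¹ * h.L c = h.L c * (h.L b)⁻¹ * h.L a := by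
  have hmed : h.L a * h.L ((h.L b)⁻¹ c) = h.L c * h.L ((h.L b)⁻¹ a) := Equiv.ext fun r => by
    have hb (y : Q) : op b ((h.L b)⁻¹ y) = y := (h.L b).apply_symm_apply y
    simpa only [Equiv.Perm.mul_apply, L_apply, hb] using h.medial b ((h.L b)⁻¹ a) ((h.L b)⁻¹ c) r
  have hinv := h.L_apply_of_mem_opAutomorphisms (inv_mem (h.L_mem_opAutomorphisms b))
  rw [hinv, hinv, inv_inv] at hmed
  calc h.L a * (h.L b)⁻¹ * h.L c = h.L a * ((h.L b)⁻¹ * h.L c * h.L b) * (h.L b)⁻¹ := by group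
    _ = h.L c * ((h.L b)⁻¹ * h.L a * h.L b) * (h.L b)⁻¹ := by rw [hmed]
    _ = h.L c * (h.L b)⁻¹ * h.L a := by group

variable (q₀ : Q)

noncomputable def disp (q : Q) : Equiv.Perm Q := h.L q * (h.L q₀)⁻¹

def dispGroup : Subgroup (Equiv.Perm Q) := Subgroup.closure (Set.range (h.disp q₀))

theorem disp_mem_dispGroup (q : Q) : h.disp q₀ q ∈ h.dispGroup q₀ :=
  Subgroup.subset_closure ⟨q, rfl⟩

theorem dispGroup_le_opAutomorphisms : h.dispGroup q₀ ≤ opAutomorphisms op :=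
  (Subgroup.closure_le _).mpr <| Set.range_subset_iff.mpr fun q =>
    mul_mem (h.L_mem_opAutomorphisms q) (inv_mem (h.L_mem_opAutomorphisms q₀))

instance : IsMulCommutative (h.dispGroup q₀) :=
  Subgroup.isMulCommutative_closure <| by
    rintro _ ⟨a, rfl⟩ _ ⟨b, rfl⟩
    simp only [disp]
    rw [← mul_assoc, h.L_mul_inv_mul_comm, mul_assoc]

theorem commute_of_mem_dispGroup {g g' : Equiv.Perm Q} (hg : g ∈ h.dispGroup q₀)
    (hg' : g' ∈ h.dispGroup q₀) : Commute g g' :=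
  congrArg Subtype.val (mul_comm' (⟨g, hg⟩ : h.dispGroup q₀) ⟨g', hg'⟩)

theorem L_mul_disp_mul_inv (q : Q) :
    h.L q₀ * h.disp q₀ q * (h.L q₀)⁻¹ = h.disp q₀ (op q₀ q) := by
  rw [disp, disp, ← h.L_apply q₀ q,
    h.L_apply_of_mem_opAutomorphisms (h.L_mem_opAutomorphisms q₀)]
  group

theorem L_mul_mul_inv_mem_dispGroup {g : Equiv.Perm Q} (hg : g ∈ h.dispGroup q₀) :
    h.L q₀ * g * (h.L q₀)⁻¹ ∈ h.dispGroup q₀ := by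
  have hle : (h.dispGroup q₀).map (MulAut.conj (h.L q₀)).toMonoidHom ≤ h.dispGroup q₀ := by
    rw [dispGroup, MonoidHom.map_closure, Subgroup.closure_le]
    rintro _ ⟨_, ⟨q, rfl⟩, rfl⟩
    exact Subgroup.subset_closure ⟨op q₀ q, (h.L_mul_disp_mul_inv q₀ q).symm⟩
  exact hle ⟨g, hg, rfl⟩

theorem L_apply_of_mem_dispGroup {g : Equiv.Perm Q} (hg : g ∈ h.dispGroup q₀) (x : Q) :
    h.L (g x) = g * (h.L q₀ * g⁻¹ * (h.L q₀)⁻¹) * h.L x := by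
  have hcomm := h.commute_of_mem_dispGroup q₀ (h.disp_mem_dispGroup q₀ x)
    (h.L_mul_mul_inv_mem_dispGroup q₀ (inv_mem hg))
  calc h.L (g x) = g * h.L x * g⁻¹ :=
        h.L_apply_of_mem_opAutomorphisms (h.dispGroup_le_opAutomorphisms q₀ hg) x
    _ = g * (h.disp q₀ x * (h.L q₀ * g⁻¹ * (h.L q₀)⁻¹) * (h.disp q₀ x)⁻¹) * h.L x := by
        simp only [disp]; group
    _ = g * (h.L q₀ * g⁻¹ * (h.L q₀)⁻¹) * h.L x := by rw [hcomm.mul_inv_cancel]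

noncomputable def dispConj : h.dispGroup q₀ →* h.dispGroup q₀ :=
  ((MulAut.conj (h.L q₀)).toMonoidHom.comp (h.dispGroup q₀).subtype).codRestrict _
    fun g => h.L_mul_mul_inv_mem_dispGroup q₀ g.2

abbrev DispModule : Type _ :=
  Module.AEval' (MonoidHom.toAdditive (h.dispConj q₀)).toIntLinearMap

noncomputable def DispModule.toPerm : h.DispModule q₀ →+ Additive (Equiv.Perm Q) :=
  (h.dispGroup q₀).subtype.toAdditive.comp (Module.AEval'.of _).symm.toAddMonoidHom

theorem DispModule.toMul_toPerm (m : h.DispModule q₀) :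
    (DispModule.toPerm h q₀ m).toMul = ((Module.AEval'.of _).symm m).toMul.1 :=
  rfl

theorem DispModule.toPerm_injective : Function.Injective (DispModule.toPerm h q₀) :=
  fun _ _ hab => (Module.AEval'.of _).symm.injective (Subtype.val_injective hab)

theorem DispModule.toPerm_mem (m : h.DispModule q₀) :
    (DispModule.toPerm h q₀ m).toMul ∈ h.dispGroup q₀ :=
  ((Module.AEval'.of _).symm m).toMul.2

theorem DispModule.toPerm_X_smul (m : h.DispModule q₀) :
    (DispModule.toPerm h q₀ ((X : ℤ[X]) • m)).toMul =
      h.L q₀ * (DispModule.toPerm h q₀ m).toMul * (h.L q₀)⁻¹ := by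
  rw [DispModule.toMul_toPerm, Module.AEval'.of_symm_X_smul]
  rfl

theorem DispModule.toPerm_X_pow_smul (k : ℕ) (m : h.DispModule q₀) :
    (DispModule.toPerm h q₀ ((X ^ k : ℤ[X]) • m)).toMul =
      h.L q₀ ^ k * (DispModule.toPerm h q₀ m).toMul * (h.L q₀ ^ k)⁻¹ := by
  induction k with
  | zero => simp
  | succ k ih =>
    rw [pow_succ', mul_smul, DispModule.toPerm_X_smul, ih]
    group

noncomputable def dispGen (q : Q) : h.DispModule q₀ :=
  Module.AEval'.of _ (Additive.ofMul ⟨h.disp q₀ q, h.disp_mem_dispGroup q₀ q⟩)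

theorem toPerm_dispGen (q : Q) :
    (DispModule.toPerm h q₀ (h.dispGen q₀ q)).toMul = h.disp q₀ q := by
  rw [DispModule.toMul_toPerm, dispGen, LinearEquiv.symm_apply_apply]
  rfl

theorem toPerm_geom_sum_smul_dispGen (q : Q) (k : ℕ) :
    (DispModule.toPerm h q₀ ((∑ i ∈ Finset.range k, X ^ i : ℤ[X]) •
      h.dispGen q₀ q)).toMul = h.L q ^ k * (h.L q₀ ^ k)⁻¹ := by
  induction k with
  | zero => simp
  | succ k ih =>
    rw [Finset.sum_range_succ, add_smul, map_add, toMul_add, ih, DispModule.toPerm_X_pow_smul,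
      toPerm_dispGen, disp, pow_succ, pow_succ]
    group

variable {n : ℕ}

theorem geom_sum_smul_dispGen (hsym : ∀ x, h.L x ^ n = 1) (q : Q) :
    (∑ i ∈ Finset.range n, X ^ i : ℤ[X]) • h.dispGen q₀ q = 0 := by
  apply DispModule.toPerm_injective h q₀
  apply Additive.toMul.injective
  rw [toPerm_geom_sum_smul_dispGen, hsym, hsym, map_zero, inv_one, mul_one]
  rfl

variable (hsym : ∀ x, h.L x ^ n = 1)

noncomputable def dispLift (q : Q) :
    symMQ.R n →ₗ[ℤ[X]] h.DispModule q₀ :=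
  Submodule.liftQ _ (LinearMap.toSpanSingleton ℤ[X] _ (h.dispGen q₀ q)) <| by
    rw [Ideal.span_le, Set.singleton_subset_iff, SetLike.mem_coe, LinearMap.mem_ker,
      LinearMap.toSpanSingleton_apply]
    exact h.geom_sum_smul_dispGen q₀ hsym q

theorem dispLift_one (q : Q) :
    h.dispLift q₀ hsym q 1 = h.dispGen q₀ q :=
  one_smul ℤ[X] (h.dispGen q₀ q)

variable {ι : Type*} (gen : ι → Q)

noncomputable def displacement : (ι →₀ symMQ.R n) →+ Additive (Equiv.Perm Q) :=
  (DispModule.toPerm h q₀).comp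
    (Finsupp.lsum ℕ fun j => h.dispLift q₀ hsym (gen j)).toAddMonoidHom

theorem displacement_single_one (j : ι) :
    (h.displacement q₀ hsym gen (Finsupp.single j 1)).toMul = h.disp q₀ (gen j) := by
  rw [displacement, AddMonoidHom.comp_apply, LinearMap.toAddMonoidHom_coe, Finsupp.lsum_single,
    dispLift_one, toPerm_dispGen]

theorem displacement_t_smul (a : ι →₀ symMQ.R n) :
    (h.displacement q₀ hsym gen (symMQ.t n • a)).toMul =
      h.L q₀ * (h.displacement q₀ hsym gen a).toMul * (h.L q₀)⁻¹ := by
  have ht : symMQ.t n • a = (X : ℤ[X]) • a := algebraMap_smul (symMQ.R n) _ a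
  rw [ht, displacement, AddMonoidHom.comp_apply, LinearMap.toAddMonoidHom_coe, map_smul,
    DispModule.toPerm_X_smul]
  rfl

theorem displacement_mem (a : ι →₀ symMQ.R n) :
    (h.displacement q₀ hsym gen a).toMul ∈ h.dispGroup q₀ :=
  DispModule.toPerm_mem h q₀ _

theorem L_displacement_apply (a : ι →₀ symMQ.R n) (x : Q) :
    h.L ((h.displacement q₀ hsym gen a).toMul x) =
      (h.displacement q₀ hsym gen ((1 - symMQ.t n) • a)).toMul * h.L x := by
  rw [h.L_apply_of_mem_dispGroup q₀ (h.displacement_mem q₀ hsym gen a), sub_smul, one_smul,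
    map_sub, toMul_sub, displacement_t_smul, div_eq_mul_inv]
  group

end IsMedialRack

namespace symMQ

variable {X : Type*} {n : ℕ} (z : X) {Q : Type*} {opQ : Q → Q → Q}
  (h : IsMedialRack opQ) (hsym : ∀ x, h.L x ^ n = 1) (ψ : X → Q)

noncomputable def lift (p : ({x : X // x ≠ z} →₀ R n) × X) : Q :=
  (h.displacement (ψ z) hsym (fun j => ψ j.1) p.1).toMul (ψ p.2)

theorem lift_zero (i : X) : lift z h hsym ψ (0, i) = ψ i := by
  rw [lift, map_zero, toMul_zero, Equiv.Perm.one_apply]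

theorem displacement_e [DecidableEq X] (i : X) :
    (h.displacement (ψ z) hsym (fun j => ψ j.1) (e n z i)).toMul = h.disp (ψ z) (ψ i) := by
  by_cases hi : i = z
  · rw [e, dif_pos hi, map_zero, toMul_zero, IsMedialRack.disp, hi, mul_inv_cancel]
  · rw [e, dif_neg hi, IsMedialRack.displacement_single_one]

theorem lift_op [DecidableEq X] (hidem : ∀ x, opQ x x = x) (p q) :
    lift z h hsym ψ (op n z p q) = opQ (lift z h hsym ψ p) (lift z h hsym ψ q) := by
  obtain ⟨a, i⟩ := p
  obtain ⟨b, j⟩ := q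
  set D := fun a => (h.displacement (ψ z) hsym (fun j : {x // x ≠ z} => ψ j.1) a).toMul
  have hfix : (h.L (ψ j))⁻¹ (ψ j) = ψ j := by
    rw [Equiv.Perm.inv_eq_iff_eq, IsMedialRack.L_apply, hidem]
  have hD : D ((1 - t n) • a + t n • b + e n z i - e n z j) =
      h.L (D a (ψ i)) * D b * (h.L (ψ j))⁻¹ := by
    simp only [D, add_right_comm _ (t n • b), map_sub, map_add, toMul_sub, toMul_add,
      IsMedialRack.displacement_t_smul, displacement_e, IsMedialRack.L_displacement_apply,
      IsMedialRack.disp, div_eq_mul_inv]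
    group
  change D ((1 - t n) • a + t n • b + e n z i - e n z j) (ψ j) = opQ (D a (ψ i)) (D b (ψ j))
  rw [hD, Equiv.Perm.mul_apply, Equiv.Perm.mul_apply, hfix]
  rfl

end symMQ

/-- `F = M × X` with `M = ⊕_{x ∈ X∖{z}} ℤ[t]/(1+t+⋯+t^{n-1})` and operation
`(a,i)*(b,j) = ((1-t)·a + t·b + e_i - e_j, j)` is an `n`-symmetric medial quandle,
and it is the free `n`-symmetric medial quandle on `{(0,i) : i ∈ X}`. -/
theorem free_n_symmetric_medial_quandle {X : Type*} [DecidableEq X]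
    (n : ℕ) (hn : 1 ≤ n) (z : X) :
    (∀ p, symMQ.op n z p p = p) ∧
    (∀ p q r, symMQ.op n z p (symMQ.op n z q r) =
      symMQ.op n z (symMQ.op n z p q) (symMQ.op n z p r)) ∧
    (∀ p q, ∃! u, symMQ.op n z p u = q) ∧
    (∀ p q u v, symMQ.op n z (symMQ.op n z p q) (symMQ.op n z u v) =
      symMQ.op n z (symMQ.op n z p u) (symMQ.op n z q v)) ∧
    (∀ p q, (fun r => symMQ.op n z p r)^[n] q = q) ∧
    (∀ (Q : Type) (opQ : Q → Q → Q),
      (∀ x, opQ x x = x) →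
      (∀ x y w, opQ x (opQ y w) = opQ (opQ x y) (opQ x w)) →
      (∀ x y, ∃! u, opQ x u = y) →
      (∀ x y u v, opQ (opQ x y) (opQ u v) = opQ (opQ x u) (opQ y v)) →
      (∀ x y, (fun r => opQ x r)^[n] y = y) →
      ∀ ψ : X → Q,
        ∃! Ψ : (({x : X // x ≠ z} →₀ symMQ.R n) × X) → Q,
          (∀ p q, Ψ (symMQ.op n z p q) = opQ (Ψ p) (Ψ q)) ∧
          (∀ i : X, Ψ ((0 : {x : X // x ≠ z} →₀ symMQ.R n), i) = ψ i)) := by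
  refine ⟨symMQ.op_self n z, symMQ.op_left_distrib n z,
    fun p => (symMQ.bijective_op hn z p).existsUnique, symMQ.op_medial n z,
    symMQ.iterate_op_n n z, ?_⟩
  intro Q opQ hidem hdistrib hdiv hmedial hsym ψ
  have hQ : IsMedialRack opQ :=
    ⟨hdistrib, hmedial, fun x => Function.bijective_iff_existsUnique _ |>.mpr (hdiv x)⟩
  have hL (x : Q) : hQ.L x ^ n = 1 := Equiv.ext (hsym x)
  have hlift_op := symMQ.lift_op z hQ hL ψ hidem
  refine ⟨symMQ.lift z hQ hL ψ, ⟨hlift_op, symMQ.lift_zero z hQ hL ψ⟩, ?_⟩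
  rintro Ψ ⟨hΨ_op, hΨ_gen⟩
  funext p
  refine (symMQ.generated hn p).eq_of_eqOn hΨ_op hlift_op ?_
  rintro _ ⟨i, rfl⟩
  rw [hΨ_gen, symMQ.lift_zero]
end
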